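/- arXiv:1204.2513 — 2 statements merged into one kernel-verified Lean document; each statement's English description precedes it below -/
import Mathlib

section
/- Let T and T' be two tournaments on a vertex set V with |V| ≥ 6, and let I be an interval of T with |I| ≥ 3 such that T[I] is indecomposable. If T and T' are both {3}-hypomorphic and {−2}-hypomorphic and |V∖I| ≥ 3, then |I⁺_T| = |I⁺_{T'}| and |I⁻_T| = |I⁻_{T'}|. Likewise, if T and T' are {−3}-hypomorphic and |V∖I| ≥ 4, then |I⁺_T| = |I⁺_{T'}| and |I⁻_T| = |I⁻_{T'}|. -/
/-- A (finite) tournament on a vertex type `V`: for each pair of distinct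
vertices exactly one arc. -/
structure Tournament (V : Type*) where
  arc : V → V → Prop
  irrefl : ∀ x, ¬ arc x x
  total : ∀ x y, x ≠ y → (arc x y ↔ ¬ arc y x)

namespace Tournament

variable {V W : Type*}

/-- The dual tournament, obtained by reversing all arcs. -/
def dual (T : Tournament V) : Tournament V where
  arc x y := T.arc y x
  irrefl x := T.irrefl x
  total x y h := T.total y x (Ne.symm h)

/-- The subtournament induced on a subset `X` of the vertex set. -/
def restrict (T : Tournament V) (X : Set V) : Tournament X where
  arc x y := T.arc x y
  irrefl x := T.irrefl x
  total x y h := T.total x y (fun e => h (Subtype.ext e))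

/-- Isomorphism of tournaments: an arc-preserving bijection. -/
def Iso (T : Tournament V) (T' : Tournament W) : Prop :=
  ∃ e : V ≃ W, ∀ x y, T.arc x y ↔ T'.arc (e x) (e y)

/-- `I` is an interval of `T`: every vertex outside `I` dominates all of `I`
or is dominated by all of `I`. -/
def IsInterval (T : Tournament V) (I : Set V) : Prop :=
  ∀ x ∉ I, (∀ y ∈ I, T.arc x y) ∨ (∀ y ∈ I, T.arc y x)

/-- A tournament is indecomposable if all its intervals are trivial. -/
def Indecomposable (T : Tournament V) : Prop :=
  ∀ I : Set V, T.IsInterval I → I = ∅ ∨ I = Set.univ ∨ ∃ x, I = {x}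

def Decomposable (T : Tournament V) : Prop := ¬ T.Indecomposable

/-- Transitive tournament (a linear order). -/
def Transitive (T : Tournament V) : Prop :=
  ∀ x y z, T.arc x y → T.arc y z → T.arc x z

/-- An almost transitive tournament is obtained from a transitive tournament
with at least 3 vertices by reversing the arc between its two extremal
vertices. -/
def AlmostTransitive [Fintype V] (T : Tournament V) : Prop :=
  3 ≤ Fintype.card V ∧
  ∃ T₀ : Tournament V, T₀.Transitive ∧
    ∃ a b : V, a ≠ b ∧ (∀ y, y ≠ a → T₀.arc a y) ∧ (∀ y, y ≠ b → T₀.arc y b) ∧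
      T.arc b a ∧
      ∀ x y, ¬ ((x = a ∧ y = b) ∨ (x = b ∧ y = a)) → (T.arc x y ↔ T₀.arc x y)

/-- Strong connectedness: a directed path between any two distinct vertices. -/
def StronglyConnected (T : Tournament V) : Prop :=
  ∀ x y : V, x ≠ y → Relation.TransGen T.arc x y

/-- `{k}`-hypomorphy: the induced subtournaments on every `k`-element set of
vertices are isomorphic. -/
def Hypo (T T' : Tournament V) (k : ℕ) : Prop :=
  ∀ X : Set V, X.ncard = k → (T.restrict X).Iso (T'.restrict X)

/-- `{-k}`-hypomorphy, i.e. `{n-k}`-hypomorphy where `n` is the number of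
vertices. -/
def MinusHypo [Fintype V] (T T' : Tournament V) (k : ℕ) : Prop :=
  Hypo T T' (Fintype.card V - k)

/-- Self duality. -/
def SelfDual (T : Tournament V) : Prop := T.Iso T.dual

/-- `{-k}`-self duality: removing any `k` vertices yields a self dual
tournament. -/
def MinusSelfDual (T : Tournament V) (k : ℕ) : Prop :=
  ∀ X : Set V, X.ncard = k → (T.restrict Xᶜ).SelfDual

/-- `{-k}`-reconstructibility: every tournament `{-k}`-hypomorphic to `T` is
isomorphic to `T`. -/
def MinusReconstructible [Fintype V] (T : Tournament V) (k : ℕ) : Prop :=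
  ∀ T' : Tournament V, MinusHypo T T' k → T.Iso T'

/-- Strong interval. -/
def IsStrongInterval (T : Tournament V) (X : Set V) : Prop :=
  T.IsInterval X ∧ ∀ Y : Set V, T.IsInterval Y → (X ∩ Y).Nonempty → X ⊆ Y ∨ Y ⊆ X

/-- `P T` : the maximal strong intervals of `T` distinct from the full vertex
set. -/
def P (T : Tournament V) : Set (Set V) :=
  {X | X.Nonempty ∧ X ≠ Set.univ ∧ T.IsStrongInterval X ∧
    ∀ Y : Set V, Y ≠ Set.univ → T.IsStrongInterval Y → X ⊆ Y → X = Y}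

/-- `Ptilde T` : equals `P T` when `T` is strongly connected; otherwise it
consists of the members of `P T` of size at least 2 together with the maximal
unions of consecutive singleton members (i.e. the maximal intervals of `T` all
of whose elements are singleton members of `P T`). -/
def Ptilde (T : Tournament V) : Set (Set V) :=
  {A | (T.StronglyConnected ∧ A ∈ T.P) ∨
    (¬ T.StronglyConnected ∧
      ((A ∈ T.P ∧ 2 ≤ A.ncard) ∨
        (A.Nonempty ∧ (∀ x ∈ A, ({x} : Set V) ∈ T.P) ∧ T.IsInterval A ∧
          ∀ B : Set V, A ⊆ B → (∀ x ∈ B, ({x} : Set V) ∈ T.P) →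
            T.IsInterval B → A = B)))}

/-- Equality of the quotients of `T` and `T'` by a common interval partition
`Part`: between any two distinct blocks, the arcs of `T` and `T'` agree. -/
def QuotientEq (T T' : Tournament V) (Part : Set (Set V)) : Prop :=
  ∀ X ∈ Part, ∀ Y ∈ Part, X ≠ Y → ∀ x ∈ X, ∀ y ∈ Y, (T.arc x y ↔ T'.arc x y)

/-- The set of vertices outside `I` dominated by every vertex of `I`. -/
def Iplus (T : Tournament V) (I : Set V) : Set V :=
  {x | x ∉ I ∧ ∀ y ∈ I, T.arc y x}

/-- The set of vertices outside `I` dominating every vertex of `I`. -/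
def Iminus (T : Tournament V) (I : Set V) : Set V :=
  {x | x ∉ I ∧ ∀ y ∈ I, T.arc x y}

/-- The 3-cycle `C₃`. -/
def C3Tour : Tournament (Fin 3) where
  arc x y := (x = 0 ∧ y = 1) ∨ (x = 1 ∧ y = 2) ∨ (x = 2 ∧ y = 0)
  irrefl := by decide
  total := by decide

/-- The transitive tournament `O_q` on `q` vertices. -/
def LinOrd (q : ℕ) : Tournament (Fin q) where
  arc x y := x < y
  irrefl x := lt_irrefl x
  total x y h := by
    constructor
    · exact fun hxy hyx => lt_asymm hxy hyx
    · intro hyx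
      exact lt_of_le_of_ne (not_lt.mp hyx) h

/-- The positive diamond `δ⁺` (on `{0,1,2,3}`, cycle `0→1→2→0`, all dominating
the center `3`). -/
def DeltaPlus : Tournament (Fin 4) where
  arc x y := (x = 0 ∧ y = 1) ∨ (x = 1 ∧ y = 2) ∨ (x = 2 ∧ y = 0) ∨
    (x = 0 ∧ y = 3) ∨ (x = 1 ∧ y = 3) ∨ (x = 2 ∧ y = 3)
  irrefl := by decide
  total := by decide

/-- The negative diamond `δ⁻`. -/
def DeltaMinus : Tournament (Fin 4) := DeltaPlus.dual

/-- `T` embeds a diamond: some 4-element subset of the vertices induces a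
diamond. -/
def EmbedsDiamond (T : Tournament V) : Prop :=
  ∃ X : Set V, X.ncard = 4 ∧
    ((T.restrict X).Iso DeltaPlus ∨ (T.restrict X).Iso DeltaMinus)

/-- `X` is a positive diamond of `T` with center `d`. -/
def IsPosDiamond (T : Tournament V) (X : Set V) (d : V) : Prop :=
  X.ncard = 4 ∧ d ∈ X ∧ (T.restrict X).Iso DeltaPlus ∧
    (T.restrict (X \ {d})).Iso C3Tour ∧ ∀ y ∈ X \ {d}, T.arc y d

/-- `X` is a negative diamond of `T` with center `d`. -/
def IsNegDiamond (T : Tournament V) (X : Set V) (d : V) : Prop :=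
  X.ncard = 4 ∧ d ∈ X ∧ (T.restrict X).Iso DeltaMinus ∧
    (T.restrict (X \ {d})).Iso C3Tour ∧ ∀ y ∈ X \ {d}, T.arc d y

/-- The tournament obtained from `H` by dilating the vertex `x` by `R`. -/
def Dilate {α β : Type*} (H : Tournament α) (x : α) (R : Tournament β) :
    Tournament ({y : α // y ≠ x} ⊕ β) where
  arc u v :=
    match u, v with
    | .inl y, .inl z => H.arc y.1 z.1
    | .inl y, .inr _ => H.arc y.1 x
    | .inr _, .inl z => H.arc x z.1
    | .inr u, .inr v => R.arc u v
  irrefl u := by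
    cases u with
    | inl y => exact H.irrefl y.1
    | inr u => exact R.irrefl u
  total u v h := by
    cases u with
    | inl y =>
      cases v with
      | inl z =>
        exact H.total y.1 z.1 (fun e => h (congrArg Sum.inl (Subtype.ext e)))
      | inr v => exact H.total y.1 x y.2
    | inr u =>
      cases v with
      | inl z => exact H.total x z.1 (Ne.symm z.2)
      | inr v => exact R.total u v (fun e => h (congrArg Sum.inr e))

/-- The class `I_{n,K}` (for `K` a set of positive integers representing the
negative indices): tournaments on `n` vertices which are indecomposable, not
self dual, and `{-k}`-self dual for every `k ∈ K`. -/
def ClassI (n : ℕ) (K : Set ℕ) (R : Tournament (Fin n)) : Prop :=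
  R.Indecomposable ∧ ¬ R.SelfDual ∧ ∀ k ∈ K, R.MinusSelfDual k

/-- Membership (up to isomorphism) in the class
`Ω_n = C₃(I_{n-2,{-1,-2,-3}}) ∪ O₃(I_{n-2,{-1,-2,-3}}) ∪ O₂(I_{n-1,{-2,-3}})`. -/
def InOmega (n : ℕ) (T : Tournament V) : Prop :=
  (∃ R : Tournament (Fin (n - 2)), ClassI (n - 2) {1, 2, 3} R ∧
    ∃ x : Fin 3, T.Iso (Dilate C3Tour x R)) ∨
  (∃ R : Tournament (Fin (n - 2)), ClassI (n - 2) {1, 2, 3} R ∧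
    ∃ x : Fin 3, T.Iso (Dilate (LinOrd 3) x R)) ∨
  (∃ R : Tournament (Fin (n - 1)), ClassI (n - 1) {2, 3} R ∧
    ∃ x : Fin 2, T.Iso (Dilate (LinOrd 2) x R))

end Tournament

/-!
Each hypothesis yields `{-d}`-hypomorphy for some `d ∈ {2, 3}`, with room left for a copy of
`T[I]` plus one vertex, together with `{3}`-hypomorphy (for `{-3}` by Kelly's lemma, as
`|V| ≥ 3 + 3`). `{3}`-hypomorphy preserves triangles up to orientation, and since every proper
part of the indecomposable `T[I]` is left by a triangle, `I` is an interval of `T'` as well.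

Kelly's lemma makes the sums of `C(m_W, ℓ)`, `ℓ ≤ d`, over the copies `W` of a fixed
tournament agree for `T` and `T'`, where `m_W` is the number of vertices of `I` missed by `W`.
A copy of `T[I]`, or of `T[I]` plus a sink, meets the interval `I` in at most one vertex or
contains it, so `m_W ∈ {0, |I| - 1, |I|}` and the moments of order `≤ 2` determine the number
of copies containing `I`. For `T[I]` this gives `T'[I] ≅ T[I]`; for `T[I]` plus a sink, the
copies containing `I` are the sets `I ∪ {x}` with `x ∈ I⁺`, whence `|I⁺_T| = |I⁺_{T'}|`,
and `|I⁻| = |V ∖ I| - |I⁺|`.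
-/

namespace Finset

variable {α : Type*} [DecidableEq α]

lemma powerset_sdiff_eq_filter_disjoint (s t : Finset α) :
    (s \ t).powerset = s.powerset.filter (Disjoint t) := by
  ext u
  simp [subset_sdiff, disjoint_comm]

lemma powersetCard_sdiff_eq_filter_disjoint (s t : Finset α) (k : ℕ) :
    (s \ t).powersetCard k = (s.powersetCard k).filter (Disjoint t) := by
  ext u
  simp [mem_powersetCard, subset_sdiff, disjoint_comm, and_right_comm]

lemma subset_of_card_sdiff_add_card_le {s t : Finset α} (h : (s \ t).card + t.card ≤ s.card) :
    t ⊆ s := by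
  have := card_sdiff_add_card_inter s t
  have hst : s ∩ t = t := eq_of_subset_of_card_le inter_subset_right (by omega)
  exact hst ▸ inter_subset_left

end Finset

namespace Nat

lemma choose_two_add_choose_two_add_self (n : ℕ) : n.choose 2 + n.choose 2 + n = n * n := by
  induction n with
  | zero => rfl
  | succ n ih =>
    rw [choose_succ_succ', choose_one_right]
    linarith

lemma sub_one_mul_eq_choose_two_add_choose_two {a m : ℕ} (h : m + 1 = a ∨ m = a) :
    (a - 1) * m = a.choose 2 + m.choose 2 := by
  rcases h with rfl | rfl
  · rw [Nat.add_sub_cancel, choose_succ_succ', choose_one_right]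
    linarith [choose_two_add_choose_two_add_self m]
  · cases m with
    | zero => rfl
    | succ k =>
      rw [Nat.add_sub_cancel, choose_succ_succ', choose_one_right]
      linarith [choose_two_add_choose_two_add_self k]

end Nat

namespace Tournament

variable {V α β : Type*}

section Basic

variable (T : Tournament V)

lemma arc_or_arc {x y : V} (h : x ≠ y) : T.arc x y ∨ T.arc y x := by
  by_cases hxy : T.arc x y
  · exact Or.inl hxy
  · exact Or.inr (by_contra fun hyx => hxy ((T.total x y h).mpr hyx))

lemma arc_asymm {x y : V} (h : T.arc x y) : ¬ T.arc y x :=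
  (T.total x y fun e => T.irrefl x (e ▸ h)).mp h

lemma ne_of_arc {x y : V} (h : T.arc x y) : x ≠ y := by
  rintro rfl
  exact T.irrefl x h

lemma arc_of_not_arc {x y : V} (hne : x ≠ y) (h : ¬ T.arc y x) : T.arc x y :=
  (T.arc_or_arc hne).resolve_right h

def IsCycle3 (x y z : V) : Prop := T.arc x y ∧ T.arc y z ∧ T.arc z x

variable {T}

lemma IsCycle3.rotate {x y z : V} (h : T.IsCycle3 x y z) : T.IsCycle3 y z x :=
  ⟨h.2.1, h.2.2, h.1⟩

lemma isCycle3_or_isCycle3_of_arc_into {x y z : V} (hx : T.arc y x ∨ T.arc z x)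
    (hy : T.arc x y ∨ T.arc z y) (hz : T.arc x z ∨ T.arc y z) :
    T.IsCycle3 x y z ∨ T.IsCycle3 x z y := by
  rcases hx with hx | hx <;> rcases hy with hy | hy <;> rcases hz with hz | hz <;>
    first
    | exact Or.inl ⟨hy, hz, hx⟩
    | exact Or.inr ⟨hz, hy, hx⟩
    | exact absurd hx (T.arc_asymm hy)
    | exact absurd hx (T.arc_asymm hz)
    | exact absurd hy (T.arc_asymm hz)

lemma IsInterval.arc_of_arc {I : Set V} (hI : T.IsInterval I) {x y z : V} (hx : x ∉ I)
    (hy : y ∈ I) (hz : z ∈ I) (h : T.arc x y) : T.arc x z :=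
  (hI x hx).elim (fun hdom => hdom z hz) fun hsub => absurd h (T.arc_asymm (hsub y hy))

lemma ncard_iplus_add_ncard_iminus [Finite V] {I : Set V} (hI : T.IsInterval I)
    (hne : I.Nonempty) :
    (Iplus T I).ncard + (Iminus T I).ncard = Iᶜ.ncard := by
  have hdisj : Disjoint (Iplus T I) (Iminus T I) := by
    rw [Set.disjoint_left]
    rintro x ⟨-, hx⟩ ⟨-, hx'⟩
    obtain ⟨y, hy⟩ := hne
    exact T.arc_asymm (hx y hy) (hx' y hy)
  have hunion : Iplus T I ∪ Iminus T I = Iᶜ := by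
    ext x
    refine ⟨by rintro (⟨hx, -⟩ | ⟨hx, -⟩) <;> exact hx, fun hx => ?_⟩
    exact (hI x hx).elim (fun h => Or.inr ⟨hx, h⟩) fun h => Or.inl ⟨hx, h⟩
  rw [← hunion, Set.ncard_union_eq hdisj]

lemma IsInterval.preimage {P : Tournament β} {g : β → V}
    (hg : ∀ i j, T.arc (g i) (g j) → P.arc i j) {I : Set V} (hI : T.IsInterval I) :
    P.IsInterval (g ⁻¹' I) := fun i hi =>
  (hI (g i) hi).imp (fun h j hj => hg i j (h _ hj)) fun h j hj => hg j i (h _ hj)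

lemma Iso.refl (T : Tournament V) : T.Iso T := ⟨Equiv.refl V, fun _ _ => Iff.rfl⟩

lemma Iso.symm {T' : Tournament α} (h : T.Iso T') : T'.Iso T := by
  obtain ⟨e, he⟩ := h
  exact ⟨e.symm, fun x y => by simpa using (he (e.symm x) (e.symm y)).symm⟩

lemma Iso.exists_arc_to {T' : Tournament α} (h : T.Iso T') (hT : ∀ x, ∃ y, T.arc y x)
    (x : α) : ∃ y, T'.arc y x := by
  obtain ⟨e, he⟩ := h
  obtain ⟨y, hy⟩ := hT (e.symm x)
  exact ⟨e y, by simpa using (he y (e.symm x)).mp hy⟩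

lemma Hypo.symm {T' : Tournament V} {k : ℕ} (h : Hypo T T' k) : Hypo T' T k :=
  fun X hX => (h X hX).symm

end Basic

section Indecomposable

variable {S : Tournament α}

lemma Indecomposable.ncard_le_one (hS : S.Indecomposable) {J : Set α} (hJ : S.IsInterval J)
    (hne : J ≠ Set.univ) : J.ncard ≤ 1 := by
  rcases hS J hJ with rfl | h | ⟨x, rfl⟩
  · simp
  · exact absurd h hne
  · simp

lemma Indecomposable.not_isInterval_compl_singleton [Finite α] (hS : S.Indecomposable)
    (h3 : 3 ≤ Nat.card α) (a : α) : ¬ S.IsInterval {a}ᶜ := fun hJ => by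
  have := hS.ncard_le_one hJ fun h => (h ▸ Set.mem_univ a : a ∈ ({a}ᶜ : Set α)) rfl
  rw [Set.ncard_compl, Set.ncard_singleton] at this
  omega

lemma Indecomposable.exists_arc_to [Finite α] (hS : S.Indecomposable) (h3 : 3 ≤ Nat.card α)
    (a : α) : ∃ b, S.arc b a := by
  by_contra! h
  refine hS.not_isInterval_compl_singleton h3 a fun x hx => ?_
  rw [Set.notMem_compl_iff, Set.mem_singleton_iff] at hx
  exact Or.inl fun y hy => hx ▸ S.arc_of_not_arc (Ne.symm hy) (h y)

lemma Indecomposable.exists_arc_from [Finite α] (hS : S.Indecomposable) (h3 : 3 ≤ Nat.card α)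
    (a : α) : ∃ b, S.arc a b := by
  by_contra! h
  refine hS.not_isInterval_compl_singleton h3 a fun x hx => ?_
  rw [Set.notMem_compl_iff, Set.mem_singleton_iff] at hx
  exact Or.inr fun y hy => hx ▸ S.arc_of_not_arc hy (h y)

/-- Without a triangle through `a`, the out-neighbourhood of `a` together with `a` would be
a nontrivial interval. -/
lemma Indecomposable.exists_isCycle3 [Finite α] (hS : S.Indecomposable) (h3 : 3 ≤ Nat.card α)
    (a : α) : ∃ b c, S.IsCycle3 a b c := by
  by_contra! h
  have hJ : S.IsInterval (insert a {b | S.arc a b}) := by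
    intro x hx
    simp only [Set.mem_insert_iff, Set.mem_ofPred_eq, not_or] at hx
    have hxa : S.arc x a := S.arc_of_not_arc hx.1 hx.2
    refine Or.inl fun y hy => ?_
    rcases hy with rfl | hy
    · exact hxa
    · exact S.arc_of_not_arc (fun e => hx.2 (e ▸ hy)) fun hyx => h y x ⟨hy, hyx, hxa⟩
  obtain ⟨b, hab⟩ := hS.exists_arc_from h3 a
  obtain ⟨c, hca⟩ := hS.exists_arc_to h3 a
  have hne : insert a {b | S.arc a b} ≠ Set.univ := fun h' => by
    have : c ∈ insert a {b | S.arc a b} := h' ▸ Set.mem_univ c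
    rcases this with rfl | hac
    · exact S.irrefl c hca
    · exact S.arc_asymm hac hca
  have := (Set.ncard_le_one_iff).mp (hS.ncard_le_one hJ hne) (Set.mem_insert a _)
    (Set.mem_insert_of_mem a hab)
  exact S.ne_of_arc hab this

/-- If no triangle leaves `A`, the smallest set of out-neighbours in `A` of a vertex outside `A`
is an interval, hence a singleton, whose element is a sink of `S[A]`. -/
lemma Indecomposable.exists_sink_of_forall_isCycle3 [Finite α] (hS : S.Indecomposable)
    {A : Set α} (hA : 1 < A.ncard) (hB : ∃ b, b ∉ A)
    (hcl : ∀ x y z, S.IsCycle3 x y z → x ∈ A → y ∈ A) :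
    ∃ s ∈ A, ∀ a ∈ A, a ≠ s → S.arc a s := by
  have ne_of_mem {a b : α} (ha : a ∈ A) (hb : b ∉ A) : a ≠ b := fun e => hb (e ▸ ha)
  have hcross {a b a' : α} (ha : a ∈ A) (hb : b ∉ A) (hab : S.arc a b) (hba' : S.arc b a') :
      S.arc a a' :=
    S.arc_of_not_arc (fun e => S.arc_asymm hab (e ▸ hba')) fun h =>
      hb (hcl a b a' ⟨hab, hba', h⟩ ha)
  have hclosed {b a a' : α} (hb : b ∉ A) (ha' : a' ∈ A) (hba : S.arc b a)
      (haa' : S.arc a a') : S.arc b a' :=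
    S.arc_of_not_arc (ne_of_mem ha' hb).symm fun h => hb (hcl a' b a ⟨h, hba, haa'⟩ ha')
  let O : α → Set α := fun b => {a | a ∈ A ∧ S.arc b a}
  have hA_ne : A ≠ Set.univ := fun h => hB.elim fun b hb => hb (h ▸ Set.mem_univ b)
  have hO : ∃ b, b ∉ A ∧ (O b).Nonempty := by
    by_contra! h
    have hint : S.IsInterval A := fun b hb => Or.inr fun a ha =>
      S.arc_of_not_arc (ne_of_mem ha hb) fun hba =>
        Set.eq_empty_iff_forall_notMem.mp (h b hb) a ⟨ha, hba⟩
    exact absurd (hS.ncard_le_one hint hA_ne) (by omega)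
  obtain ⟨b₁, ⟨hb₁, hb₁ne⟩, hmin⟩ :=
    Set.exists_min_image {b | b ∉ A ∧ (O b).Nonempty} (fun b => (O b).ncard) (Set.toFinite _) hO
  have hint : S.IsInterval (O b₁) := by
    intro x hx
    by_cases hxA : x ∈ A
    · have hxb₁ : S.arc x b₁ := S.arc_of_not_arc (ne_of_mem hxA hb₁) fun h => hx ⟨hxA, h⟩
      exact Or.inl fun y hy => hcross hxA hb₁ hxb₁ hy.2
    by_cases hxO : (O x).Nonempty
    · refine Or.inl fun y hy => by_contra fun hxy => ?_
      have hyx : S.arc y x := S.arc_of_not_arc (ne_of_mem hy.1 hxA) hxy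
      have hsub : O x ⊆ O b₁ := fun a' ha' =>
        ⟨ha'.1, hclosed hb₁ ha'.1 hy.2 (hcross hy.1 hxA hyx ha'.2)⟩
      have hlt := Set.ncard_lt_ncard (ssubset_of_subset_of_ne hsub fun e =>
        (e ▸ hy : y ∈ O x).2 |> S.arc_asymm hyx) (Set.toFinite _)
      exact absurd (hmin x ⟨hxA, hxO⟩) (not_le.mpr hlt)
    · exact Or.inr fun y hy =>
        S.arc_of_not_arc (ne_of_mem hy.1 hxA) fun hxy => hxO ⟨y, hy.1, hxy⟩
  obtain ⟨s, hs⟩ : ∃ s, O b₁ = {s} := by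
    rcases hS _ hint with h | h | h
    · exact absurd h hb₁ne.ne_empty
    · exact absurd (h ▸ Set.mem_univ b₁ : b₁ ∈ O b₁).1 hb₁
    · exact h
  have hsO : s ∈ O b₁ := hs ▸ rfl
  refine ⟨s, hsO.1, fun a ha has => ?_⟩
  have hab₁ : S.arc a b₁ := S.arc_of_not_arc (ne_of_mem ha hb₁) fun h =>
    has (by simpa [hs] using (show a ∈ O b₁ from ⟨ha, h⟩))
  exact hcross ha hb₁ hab₁ hsO.2

/-- A sink of `S[A]` lies on no triangle inside `A`, so it can be moved out of `A`; this
reduces the claim to `|A| = 1`. -/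
lemma Indecomposable.exists_isCycle3_mem_notMem [Finite α] (hS : S.Indecomposable)
    (h3 : 3 ≤ Nat.card α) {A : Set α} (hA : A.Nonempty) (hB : ∃ b, b ∉ A) :
    ∃ x y z, S.IsCycle3 x y z ∧ x ∈ A ∧ y ∉ A := by
  induction hn : A.ncard using Nat.strong_induction_on generalizing A with
  | _ n ih =>
  by_contra! hcl
  obtain ⟨a, ha⟩ := hA
  by_cases hA1 : A.ncard ≤ 1
  · obtain ⟨b, c, hc⟩ := hS.exists_isCycle3 h3 a
    exact S.ne_of_arc hc.1 ((Set.ncard_le_one_iff).mp hA1 ha (hcl a b c hc ha))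
  obtain ⟨s, hs, hsink⟩ := hS.exists_sink_of_forall_isCycle3 (by omega) hB hcl
  have hcard : (A \ {s}).ncard + 1 = A.ncard := Set.ncard_sdiff_singleton_add_one hs
  obtain ⟨x, y, z, hc, hx, hy⟩ := ih _ (by omega) (A := A \ {s})
    (Set.nonempty_of_ncard_ne_zero (by omega)) (hB.imp fun b hb h => hb h.1) rfl
  have hyA : y ∈ A := hcl x y z hc hx.1
  obtain rfl : y = s := by simpa [hyA] using hy
  have hz : z ∈ A := hcl y z x hc.rotate hyA
  exact S.arc_asymm hc.2.1 (hsink z hz (S.ne_of_arc hc.2.1).symm)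

end Indecomposable

section Triangles

variable {T T' : Tournament V}

/-- A triangle is the only 3-vertex tournament in which every vertex has an in-neighbour, and
this is preserved by isomorphism. -/
lemma Hypo.isCycle3_or_isCycle3 (h : Hypo T T' 3) {x y z : V} (hc : T.IsCycle3 x y z) :
    T'.IsCycle3 x y z ∨ T'.IsCycle3 x z y := by
  set X : Set V := {x, y, z}
  have hX : X.ncard = 3 := Set.ncard_eq_three.mpr ⟨x, y, z, T.ne_of_arc hc.1,
    (T.ne_of_arc hc.2.2).symm, T.ne_of_arc hc.2.1, rfl⟩
  have hT : ∀ u : X, ∃ p, (T.restrict X).arc p u := by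
    rintro ⟨u, hu | hu | hu⟩ <;> subst hu
    exacts [⟨⟨z, by simp [X]⟩, hc.2.2⟩, ⟨⟨x, by simp [X]⟩, hc.1⟩,
      ⟨⟨y, by simp [X]⟩, hc.2.1⟩]
  have into (v : V) (hv : v ∈ X) : T'.arc x v ∨ T'.arc y v ∨ T'.arc z v := by
    obtain ⟨⟨p, hp⟩, hpv⟩ := (h X hX).exists_arc_to hT ⟨v, hv⟩
    rcases hp with rfl | rfl | rfl
    exacts [Or.inl hpv, Or.inr (Or.inl hpv), Or.inr (Or.inr hpv)]
  exact isCycle3_or_isCycle3_of_arc_into ((into x (by simp [X])).resolve_left (T'.irrefl x))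
    ((into y (by simp [X])).imp_right (Or.resolve_left · (T'.irrefl y)))
    ((into z (by simp [X])).imp_right (Or.resolve_right · (T'.irrefl z)))

/-- Were `x ∉ I` to dominate part `A` of `I` in `T'` and be dominated by the rest, every
`T'`-arc between the two parts would point into `A` (a `T'`-triangle through `x` would come from
a `T`-triangle through `x` meeting the interval `I`), so no triangle of `T[I]` could leave `A`. -/
lemma IsInterval.of_hypo3 [Finite V] {I : Set V} (hI : T.IsInterval I)
    (hind : (T.restrict I).Indecomposable) (hI3 : 3 ≤ I.ncard) (h : Hypo T T' 3) :
    T'.IsInterval I := by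
  intro x hx
  by_contra! hmix
  obtain ⟨⟨b, hbI, hxb⟩, ⟨a, haI, hax⟩⟩ := hmix
  have hxI {y : V} (hy : y ∈ I) : x ≠ y := fun e => hx (e ▸ hy)
  let A : Set I := {y | T'.arc x y}
  have hcut (p q : I) (hp : p ∈ A) (hq : q ∉ A) : T'.arc q p := by
    have hqx : T'.arc q x := T'.arc_of_not_arc (hxI q.2).symm hq
    refine T'.arc_of_not_arc (fun e => hq (Subtype.ext e ▸ hp)) fun hpq => ?_
    rcases h.symm.isCycle3_or_isCycle3 ⟨hp, hpq, hqx⟩ with hc | hc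
    · exact T.arc_asymm (hI.arc_of_arc hx p.2 q.2 hc.1) hc.2.2
    · exact T.arc_asymm (hI.arc_of_arc hx q.2 p.2 hc.1) hc.2.2
  have hcard : 3 ≤ Nat.card I := by rwa [Nat.card_coe_set_eq]
  obtain ⟨p, q, r, hc, hp, hq⟩ := hind.exists_isCycle3_mem_notMem hcard (A := A)
    ⟨⟨a, haI⟩, T'.arc_of_not_arc (hxI haI) hax⟩ ⟨⟨b, hbI⟩, hxb⟩
  rcases h.isCycle3_or_isCycle3 hc with hc' | hc'
  · exact T'.arc_asymm hc'.1 (hcut p q hp hq)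
  · by_cases hr : r ∈ A
    · exact T'.arc_asymm hc'.2.1 (hcut r q hr hq)
    · exact T'.arc_asymm hc'.1 (hcut p r hp hr)

end Triangles

section Copies

variable [Fintype β] {T T' : Tournament V} {P : Tournament β}

def IsCopy (T : Tournament V) (P : Tournament β) (W : Finset V) : Prop :=
  ∃ g : β ↪ V, (∀ i j, P.arc i j ↔ T.arc (g i) (g j)) ∧ Finset.univ.map g = W

open scoped Classical in
noncomputable def copies (T : Tournament V) (P : Tournament β) (U : Finset V) :
    Finset (Finset V) :=
  U.powerset.filter (IsCopy T P)

lemma mem_copies {U W : Finset V} : W ∈ copies T P U ↔ W ⊆ U ∧ IsCopy T P W := by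
  simp [copies]

lemma IsCopy.card_eq {W : Finset V} (h : IsCopy T P W) : W.card = Fintype.card β := by
  obtain ⟨g, -, rfl⟩ := h
  simp

lemma IsCopy.map {W : Finset V} (h : IsCopy T P W) (σ : V ↪ V)
    (hσ : ∀ x ∈ W, ∀ y ∈ W, T.arc x y ↔ T'.arc (σ x) (σ y)) :
    IsCopy T' P (W.map σ) := by
  obtain ⟨g, hg, rfl⟩ := h
  refine ⟨g.trans σ, fun i j => (hg i j).trans (hσ _ (by simp) _ (by simp)), ?_⟩
  rw [Finset.map_map]

lemma isCopy_restrict (T : Tournament V) (A : Finset V) : IsCopy T (T.restrict ↑A) A :=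
  ⟨Function.Embedding.subtype _, fun _ _ => Iff.rfl, by ext; simp⟩

lemma IsCopy.iso {W : Finset V} (h : IsCopy T P W) : (T.restrict ↑W).Iso P := by
  obtain ⟨g, hg, rfl⟩ := h
  refine Iso.symm ⟨(Equiv.ofInjective g g.injective).trans (Equiv.setCongr (by simp)), ?_⟩
  intro i j
  exact hg i j

variable [DecidableEq V]

lemma card_copies_le {U : Finset V} (h : (T.restrict ↑U).Iso (T'.restrict ↑U)) :
    (copies T P U).card ≤ (copies T' P U).card := by
  obtain ⟨f, hf⟩ := h
  let σ : Equiv.Perm V := f.subtypeCongr (Equiv.refl _)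
  have hσ {x : V} (hx : x ∈ U) : σ x = f ⟨x, hx⟩ := Equiv.Perm.subtypeCongr.left_apply _ _ _
  refine Finset.card_le_card_of_injOn (fun W => W.map σ.toEmbedding) (fun W hW => ?_)
    (fun W _ W' _ e => Finset.map_injective _ e)
  obtain ⟨hWU, hW⟩ := mem_copies.mp (Finset.mem_coe.mp hW)
  refine mem_copies.mpr ⟨fun v hv => ?_, hW.map _ fun x hx y hy => ?_⟩
  · obtain ⟨x, hx, rfl⟩ := Finset.mem_map.mp hv
    simp [hσ (hWU hx)]
  · simp only [Equiv.toEmbedding_apply, hσ (hWU hx), hσ (hWU hy)]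
    exact hf ⟨x, hWU hx⟩ ⟨y, hWU hy⟩

lemma card_copies_congr {U : Finset V} (h : (T.restrict ↑U).Iso (T'.restrict ↑U)) :
    (copies T P U).card = (copies T' P U).card :=
  le_antisymm (card_copies_le h) (card_copies_le h.symm)

lemma copies_sdiff (U L : Finset V) :
    copies T P (U \ L) = (copies T P U).filter (fun W => Disjoint W L) := by
  ext W
  simp [mem_copies, Finset.subset_sdiff, and_right_comm]

end Copies

section Counting

open Finset

variable [Fintype V] [DecidableEq V] [Fintype β] {T T' : Tournament V} {P : Tournament β}

lemma card_copies_mul_choose (T : Tournament V) (P : Tournament β) (L : Finset V) (k : ℕ) :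
    (copies T P (univ \ L)).card * (Fintype.card V - L.card - Fintype.card β).choose k =
      ∑ Z ∈ (univ \ L).powersetCard k, (copies T P (univ \ (L ∪ Z))).card := by
  calc (copies T P (univ \ L)).card * (Fintype.card V - L.card - Fintype.card β).choose k
      = ∑ W ∈ copies T P (univ \ L),
          (((univ \ L).powersetCard k).filter (Disjoint W)).card := by
        refine (sum_const_nat fun W hW => ?_).symm
        obtain ⟨hWL, hW⟩ := mem_copies.mp hW
        rw [← powersetCard_sdiff_eq_filter_disjoint, card_powersetCard,
          card_sdiff_of_subset hWL, card_sdiff_of_subset (subset_univ L), card_univ, hW.card_eq]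
    _ = ∑ Z ∈ (univ \ L).powersetCard k,
          ((copies T P (univ \ L)).filter (Disjoint · Z)).card :=
        sum_card_bipartiteAbove_eq_sum_card_bipartiteBelow Disjoint
    _ = ∑ Z ∈ (univ \ L).powersetCard k, (copies T P (univ \ (L ∪ Z))).card := by
        simp_rw [← copies_sdiff, sdiff_sdiff_left, sup_eq_union]

/-- Kelly's lemma: count the pairs `(Z, W)` with `|L ∪ Z| = d` and `W` a copy avoiding
`L ∪ Z`. -/
lemma card_copies_compl_eq {d : ℕ} (hd : MinusHypo T T' d)
    (hβ : Fintype.card β + d ≤ Fintype.card V) {L : Finset V} (hL : L.card ≤ d) :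
    (copies T P (univ \ L)).card = (copies T' P (univ \ L)).card := by
  have hpos : 0 < (Fintype.card V - L.card - Fintype.card β).choose (d - L.card) :=
    Nat.choose_pos (by omega)
  refine Nat.eq_of_mul_eq_mul_right hpos ?_
  rw [card_copies_mul_choose, card_copies_mul_choose]
  refine sum_congr rfl fun Z hZ => card_copies_congr (hd _ ?_)
  obtain ⟨hZL, hZ⟩ := mem_powersetCard.mp hZ
  rw [Set.ncard_coe_finset, card_sdiff_of_subset (subset_univ _), card_univ,
    card_union_of_disjoint (disjoint_of_subset_right hZL disjoint_sdiff), hZ]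
  omega

lemma sum_choose_card_sdiff (T : Tournament V) (P : Tournament β) (A : Finset V) (ℓ : ℕ) :
    ∑ W ∈ copies T P univ, (A \ W).card.choose ℓ =
      ∑ L ∈ A.powersetCard ℓ, (copies T P (univ \ L)).card := by
  calc ∑ W ∈ copies T P univ, (A \ W).card.choose ℓ
      = ∑ W ∈ copies T P univ, ((A.powersetCard ℓ).filter (Disjoint W)).card := by
        simp_rw [← powersetCard_sdiff_eq_filter_disjoint, card_powersetCard]
    _ = ∑ L ∈ A.powersetCard ℓ, ((copies T P univ).filter (Disjoint · L)).card :=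
        sum_card_bipartiteAbove_eq_sum_card_bipartiteBelow Disjoint
    _ = ∑ L ∈ A.powersetCard ℓ, (copies T P (univ \ L)).card := by simp_rw [← copies_sdiff]

/-- Inclusion–exclusion over the vertices of `A` missed by a copy. -/
lemma card_superset_copies_eq_sum (T : Tournament V) (P : Tournament β) (A : Finset V) :
    (((copies T P univ).filter (A ⊆ ·)).card : ℤ) =
      ∑ L ∈ A.powerset, (-1 : ℤ) ^ L.card * (copies T P (univ \ L)).card := by
  calc (((copies T P univ).filter (A ⊆ ·)).card : ℤ)
      = ∑ W ∈ copies T P univ,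
          ∑ L ∈ A.powerset.filter (Disjoint W), (-1 : ℤ) ^ L.card := by
        rw [natCast_card_filter]
        refine sum_congr rfl fun W _ => ?_
        simp_rw [← powerset_sdiff_eq_filter_disjoint, sum_powerset_neg_one_pow_card,
          sdiff_eq_empty_iff_subset]
    _ = ∑ L ∈ A.powerset,
          ∑ W ∈ (copies T P univ).filter (Disjoint · L), (-1 : ℤ) ^ L.card :=
        sum_sum_bipartiteAbove_eq_sum_sum_bipartiteBelow Disjoint _
    _ = ∑ L ∈ A.powerset, (-1 : ℤ) ^ L.card * (copies T P (univ \ L)).card := by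
        simp_rw [sum_const, ← copies_sdiff, nsmul_eq_mul, mul_comm]

lemma card_superset_copies_eq {d : ℕ} (hd : MinusHypo T T' d)
    (hβ : Fintype.card β + d ≤ Fintype.card V) {A : Finset V} (hA : A.card ≤ d) :
    ((copies T P univ).filter (A ⊆ ·)).card = ((copies T' P univ).filter (A ⊆ ·)).card := by
  have := card_superset_copies_eq_sum T P A
  rw [sum_congr rfl fun L hL => by
    rw [card_copies_compl_eq hd hβ ((card_le_card (mem_powerset.mp hL)).trans hA)],
    ← card_superset_copies_eq_sum] at this
  exact_mod_cast this

lemma iso_restrict_of_card_superset_copies_eq {A : Finset V}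
    (h : ((copies T (T.restrict ↑A) univ).filter (A ⊆ ·)).card =
      ((copies T' (T.restrict ↑A) univ).filter (A ⊆ ·)).card) :
    (T'.restrict ↑A).Iso (T.restrict ↑A) := by
  have hA : A ∈ (copies T (T.restrict ↑A) univ).filter (A ⊆ ·) :=
    mem_filter.mpr ⟨mem_copies.mpr ⟨subset_univ A, isCopy_restrict T A⟩, subset_rfl⟩
  obtain ⟨W, hW⟩ := card_pos.mp (h ▸ card_pos.mpr ⟨A, hA⟩)
  obtain ⟨⟨-, hWc⟩, hAW⟩ := And.imp_left mem_copies.mp (mem_filter.mp hW)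
  obtain rfl : A = W := eq_of_subset_of_card_le hAW (by simp [hWc.card_eq])
  exact hWc.iso

lemma MinusHypo.hypo {d k : ℕ} (hd : MinusHypo T T' d) (hk : k ≤ d)
    (hn : k + d ≤ Fintype.card V) : Hypo T T' k := by
  intro X hX
  obtain ⟨A, rfl⟩ := X.toFinite.exists_finset_coe
  rw [Set.ncard_coe_finset] at hX
  exact (iso_restrict_of_card_superset_copies_eq
    (card_superset_copies_eq hd (by simpa [hX]) (hX.le.trans hk))).symm

/-- When every copy of `P` meets `A` in at most one vertex or contains it, the number `m` of
vertices of `A` missed by a copy is `0`, `|A| - 1` or `|A|`, and on these three values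
`C(|A|,2) [m = 0] + (|A| - 1) m = C(|A|,2) + C(m,2)`; so the moments of order `0, 1, 2`, which
Kelly's lemma controls, determine the number of copies containing `A`. -/
lemma card_superset_copies_eq_of_dichotomy {d : ℕ} (hd : MinusHypo T T' d) (hd2 : 2 ≤ d)
    (hβ : Fintype.card β + d ≤ Fintype.card V) {A : Finset V} (hA : 2 ≤ A.card)
    (hT : ∀ W ∈ copies T P univ, (W ∩ A).card ≤ 1 ∨ A ⊆ W)
    (hT' : ∀ W ∈ copies T' P univ, (W ∩ A).card ≤ 1 ∨ A ⊆ W) :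
    ((copies T P univ).filter (A ⊆ ·)).card = ((copies T' P univ).filter (A ⊆ ·)).card := by
  have hmoment (ℓ : ℕ) (hℓ : ℓ ≤ d) : ∑ W ∈ copies T P univ, (A \ W).card.choose ℓ =
      ∑ W ∈ copies T' P univ, (A \ W).card.choose ℓ := by
    rw [sum_choose_card_sdiff, sum_choose_card_sdiff]
    exact sum_congr rfl fun L hL =>
      card_copies_compl_eq hd hβ ((mem_powersetCard.mp hL).2 ▸ hℓ)
  have hid (T₀ : Tournament V)
      (h₀ : ∀ W ∈ copies T₀ P univ, (W ∩ A).card ≤ 1 ∨ A ⊆ W) :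
      A.card.choose 2 * ((copies T₀ P univ).filter (A ⊆ ·)).card +
          (A.card - 1) * ∑ W ∈ copies T₀ P univ, (A \ W).card.choose 1 =
        A.card.choose 2 * ∑ W ∈ copies T₀ P univ, (A \ W).card.choose 0 +
          ∑ W ∈ copies T₀ P univ, (A \ W).card.choose 2 := by
    rw [card_filter, mul_sum, mul_sum, mul_sum, ← sum_add_distrib, ← sum_add_distrib]
    refine sum_congr rfl fun W hW => ?_
    by_cases hAW : A ⊆ W
    · simp [hAW, sdiff_eq_empty_iff_subset.mpr hAW]
    have hsdiff := card_sdiff_add_card_inter A W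
    have hinter := (h₀ W hW).resolve_right hAW
    rw [inter_comm] at hinter
    rw [if_neg hAW, Nat.choose_zero_right, Nat.choose_one_right, mul_zero, zero_add, mul_one,
      Nat.sub_one_mul_eq_choose_two_add_choose_two (by omega)]
  have hcount := hid T hT
  rw [hmoment 0 (by omega), hmoment 1 (by omega), hmoment 2 hd2, ← hid T' hT'] at hcount
  exact Nat.eq_of_mul_eq_mul_left (Nat.choose_pos hA) (by omega)

end Counting

section Intervals

open Finset

variable [Fintype β] {T : Tournament V} {P : Tournament β}

lemma IsCopy.card_inter_le_one_or_subset [DecidableEq V] {W A : Finset V} (hW : IsCopy T P W)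
    (hA : T.IsInterval ↑A)
    (hP : ∀ K : Set β, P.IsInterval K →
      K.ncard ≤ 1 ∨ Kᶜ.ncard + A.card ≤ Fintype.card β) :
    (W ∩ A).card ≤ 1 ∨ A ⊆ W := by
  obtain ⟨g, hg, rfl⟩ := hW
  have hK : P.IsInterval (g ⁻¹' ↑A) := hA.preimage fun i j h => (hg i j).mpr h
  have hinter : (univ.map g ∩ A).card = (g ⁻¹' ↑A).ncard := by
    rw [← filter_mem_eq_inter, filter_map, card_map, ← Set.ncard_coe_finset]
    congr 1
    ext
    simp
  have hsdiff : (univ.map g \ A).card = (g ⁻¹' ↑A)ᶜ.ncard := by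
    rw [← filter_notMem_eq_sdiff, filter_map, card_map, ← Set.ncard_coe_finset]
    congr 1
    ext
    simp
  rcases hP _ hK with h | h
  · exact Or.inl (hinter ▸ h)
  · exact Or.inr (subset_of_card_sdiff_add_card_le (by simpa [hsdiff] using h))

lemma IsCopy.not_forall_arc [DecidableEq V] {A : Finset V} {w : V}
    (hW : IsCopy T P (insert w A)) (hP : ∀ i, ∃ j, P.arc j i) : ¬ ∀ y ∈ A, T.arc w y := by
  obtain ⟨g, hg, hgW⟩ := hW
  intro hw
  obtain ⟨i, -, rfl⟩ := mem_map.mp (hgW ▸ mem_insert_self w A)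
  obtain ⟨j, hj⟩ := hP i
  have hjA : g j ∈ A := by
    have := hgW ▸ mem_map_of_mem g (mem_univ j)
    exact (mem_insert.mp this).resolve_left (g.injective.ne (P.ne_of_arc hj))
  exact T.arc_asymm ((hg j i).mp hj) (hw _ hjA)

lemma IsInterval.mem_iplus_of_isCopy_insert [DecidableEq V] {A : Finset V} {w : V}
    (hA : T.IsInterval ↑A) (hw : w ∉ A) (hW : IsCopy T P (insert w A))
    (hP : ∀ i, ∃ j, P.arc j i) : w ∈ Iplus T ↑A :=
  ⟨hw, (hA w hw).resolve_left (hW.not_forall_arc hP)⟩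

end Intervals

section WithSink

open Finset

variable {γ : Type*}

def withSink (Q : Tournament γ) : Tournament (Option γ) where
  arc x y :=
    match x, y with
    | some a, some b => Q.arc a b
    | some _, none => True
    | none, _ => False
  irrefl x := by cases x <;> simp [Q.irrefl]
  total x y h := by
    cases x with
    | none => cases y <;> simp_all
    | some a =>
      cases y with
      | none => simp
      | some b => exact Q.total a b fun e => h (e ▸ rfl)

lemma withSink_exists_arc_to [Nonempty γ] {Q : Tournament γ} (hQ : ∀ a, ∃ b, Q.arc b a) :
    ∀ o, ∃ p, (withSink Q).arc p o
  | none => ⟨some (Classical.arbitrary γ), trivial⟩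
  | some a =>
    let ⟨b, hb⟩ := hQ a
    ⟨some b, hb⟩

/-- An interval of `Q` plus the sink is an interval of `withSink Q` only if its complement
in `Q` is dominated by it, which for a singleton would make a sink of `Q`. -/
lemma Indecomposable.isInterval_withSink [Finite γ] {Q : Tournament γ} (hQ : Q.Indecomposable)
    (h3 : 3 ≤ Nat.card γ) {K : Set (Option γ)} (hK : (withSink Q).IsInterval K) :
    K.ncard ≤ 1 ∨ Kᶜ.ncard ≤ 1 := by
  have hK' : Q.IsInterval (some ⁻¹' K) := hK.preimage (g := some) fun _ _ h => h
  have le_one {L : Set (Option γ)} (o : Option γ) (hL : L ⊆ {o}) : L.ncard ≤ 1 :=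
    (Set.ncard_le_ncard hL).trans (Set.ncard_singleton o).le
  rcases hQ _ hK' with h | h | ⟨z, h⟩
  · refine Or.inl (le_one none fun o ho => ?_)
    cases o with
    | none => rfl
    | some a => exact absurd (show a ∈ some ⁻¹' K from ho) (h ▸ Set.notMem_empty a)
  · refine Or.inr (le_one none fun o ho => ?_)
    cases o with
    | none => rfl
    | some a => exact absurd (show a ∈ some ⁻¹' K from h ▸ Set.mem_univ a) ho
  by_cases hn : none ∈ K
  · have hz : some z ∈ K := show z ∈ some ⁻¹' K from h ▸ rfl
    have hsink (u : γ) (hu : u ≠ z) : Q.arc u z := by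
      have hu' : some u ∉ K := fun hu' => by
        have : u ∈ some ⁻¹' K := hu'
        rw [h, Set.mem_singleton_iff] at this
        exact hu this
      exact (hK _ hu').resolve_right (fun h' => h' none hn) _ hz
    obtain ⟨b, hb⟩ := hQ.exists_arc_from h3 z
    exact absurd (hsink b (Q.ne_of_arc hb).symm) (Q.arc_asymm hb)
  · refine Or.inl (le_one (some z) fun o ho => ?_)
    cases o with
    | none => exact absurd ho hn
    | some a =>
      have : a ∈ some ⁻¹' K := ho
      rw [h, Set.mem_singleton_iff] at this
      rw [this, Set.mem_singleton_iff]

variable [DecidableEq V] {T : Tournament V} {A : Finset V}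

lemma isCopy_insert_withSink [Fintype γ] {Q : Tournament γ} (hiso : (T.restrict ↑A).Iso Q)
    {w : V} (hw : w ∈ Iplus T ↑A) : IsCopy T (withSink Q) (insert w A) := by
  obtain ⟨e, he⟩ := hiso
  let f : γ ↪ V := e.symm.toEmbedding.trans (Function.Embedding.subtype _)
  refine ⟨f.optionElim w fun ⟨a, ha⟩ => hw.1 (ha ▸ (e.symm a).2), ?_, ?_⟩
  · rintro (_ | a) (_ | b)
    · exact iff_of_false id (T.irrefl w)
    · exact iff_of_false id (T.arc_asymm (hw.2 _ (e.symm b).2))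
    · exact iff_of_true trivial (hw.2 _ (e.symm a).2)
    · have := (he (e.symm a) (e.symm b)).symm
      rwa [e.apply_symm_apply, e.apply_symm_apply] at this
  · ext v
    simp only [mem_map, mem_univ, true_and, mem_insert]
    constructor
    · rintro ⟨_ | a, rfl⟩
      · exact Or.inl rfl
      · exact Or.inr (by simp [f])
    · rintro (rfl | hv)
      · exact ⟨none, rfl⟩
      · exact ⟨some (e ⟨v, hv⟩), by simp [f]⟩

lemma card_superset_copies_withSink [Fintype V] [Fintype γ] {Q : Tournament γ}
    (hA : T.IsInterval ↑A) (hiso : (T.restrict ↑A).Iso Q)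
    (hQ : ∀ o, ∃ p, (withSink Q).arc p o) :
    ((copies T (withSink Q) univ).filter (A ⊆ ·)).card = (Iplus T ↑A).ncard := by
  classical
  rw [Set.ncard_eq_toFinset_card']
  symm
  refine card_bij (fun w _ => insert w A) (fun w hw => ?_) (fun w hw w' _ h => ?_) fun W hW => ?_
  · rw [Set.mem_toFinset] at hw
    exact mem_filter.mpr ⟨mem_copies.mpr ⟨subset_univ _, isCopy_insert_withSink hiso hw⟩,
      subset_insert w A⟩
  · rw [Set.mem_toFinset] at hw
    exact (mem_insert.mp (h ▸ mem_insert_self w A)).resolve_right hw.1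
  obtain ⟨⟨-, hWc⟩, hAW⟩ := And.imp_left mem_copies.mp (mem_filter.mp hW)
  have hcard : (W \ A).card = 1 := by
    obtain ⟨e, -⟩ := hiso
    rw [card_sdiff_of_subset hAW, hWc.card_eq, Fintype.card_option, ← Fintype.card_congr e]
    simp
  obtain ⟨w, hw⟩ := card_eq_one.mp hcard
  have hwA : w ∉ A := (mem_sdiff.mp (hw ▸ mem_singleton_self w)).2
  have hWw : W = insert w A := by rw [← sdiff_union_of_subset hAW, hw, insert_eq]
  exact ⟨w, Set.mem_toFinset.mpr (hA.mem_iplus_of_isCopy_insert hwA (hWw ▸ hWc) hQ),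
    hWw.symm⟩

end WithSink

section CopiesOfInterval

open Finset

variable [Fintype V] [DecidableEq V] {T T' : Tournament V} {A : Finset V} {d : ℕ}

lemma iso_restrict_of_minusHypo (hd : MinusHypo T T' d) (hd2 : 2 ≤ d)
    (hn : A.card + d ≤ Fintype.card V) (hI : T.IsInterval ↑A) (hI' : T'.IsInterval ↑A)
    (hind : (T.restrict ↑A).Indecomposable) (hA : 2 ≤ A.card) :
    (T'.restrict ↑A).Iso (T.restrict ↑A) := by
  have hP (K : Set (↑A : Set V)) (hK : (T.restrict ↑A).IsInterval K) :
      K.ncard ≤ 1 ∨ Kᶜ.ncard + A.card ≤ Fintype.card (↑A : Set V) := by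
    rcases hind K hK with rfl | rfl | ⟨x, rfl⟩ <;> simp
  exact iso_restrict_of_card_superset_copies_eq (card_superset_copies_eq_of_dichotomy hd hd2
    (by simpa using hn) hA (fun W hW => (mem_copies.mp hW).2.card_inter_le_one_or_subset hI hP)
    fun W hW => (mem_copies.mp hW).2.card_inter_le_one_or_subset hI' hP)

lemma ncard_iplus_eq_of_minusHypo (hd : MinusHypo T T' d) (hd2 : 2 ≤ d)
    (hn : A.card + 1 + d ≤ Fintype.card V) (hI : T.IsInterval ↑A) (hI' : T'.IsInterval ↑A)
    (hind : (T.restrict ↑A).Indecomposable) (hA : 3 ≤ A.card)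
    (hiso : (T'.restrict ↑A).Iso (T.restrict ↑A)) :
    (Iplus T ↑A).ncard = (Iplus T' ↑A).ncard := by
  have h3 : 3 ≤ Nat.card (↑A : Set V) := by simpa using hA
  have : Nonempty (↑A : Set V) := Nat.card_pos_iff.mp (by omega) |>.1
  have hQ := withSink_exists_arc_to (hind.exists_arc_to h3)
  have hP (K : Set (Option (↑A : Set V))) (hK : (withSink (T.restrict ↑A)).IsInterval K) :
      K.ncard ≤ 1 ∨ Kᶜ.ncard + A.card ≤ Fintype.card (Option (↑A : Set V)) := by
    rcases hind.isInterval_withSink h3 hK with h | h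
    · exact Or.inl h
    · refine Or.inr ?_
      simp only [Fintype.card_option, Finset.coe_sort_coe, Fintype.card_coe]
      omega
  rw [← card_superset_copies_withSink hI (Iso.refl _) hQ,
    ← card_superset_copies_withSink hI' hiso hQ]
  exact card_superset_copies_eq_of_dichotomy hd hd2 (by simpa using hn) (by omega)
    (fun W hW => (mem_copies.mp hW).2.card_inter_le_one_or_subset hI hP)
    fun W hW => (mem_copies.mp hW).2.card_inter_le_one_or_subset hI' hP

end CopiesOfInterval

end Tournament

open Tournament

theorem stmt7_general {V : Type*} [Fintype V] (T T' : Tournament V)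
    (I : Set V) (hI : T.IsInterval I)
    (hI3 : 3 ≤ I.ncard) (hind : (T.restrict I).Indecomposable) :
    ((Tournament.Hypo T T' 3 ∧ Tournament.MinusHypo T T' 2 ∧ 3 ≤ Iᶜ.ncard) ∨
      (Tournament.MinusHypo T T' 3 ∧ 4 ≤ Iᶜ.ncard)) →
    (Tournament.Iplus T I).ncard = (Tournament.Iplus T' I).ncard ∧
      (Tournament.Iminus T I).ncard = (Tournament.Iminus T' I).ncard := by
  classical
  intro hyp
  obtain ⟨A, rfl⟩ := I.toFinite.exists_finset_coe
  have hcompl : (↑A : Set V)ᶜ.ncard + A.card = Fintype.card V := by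
    rw [Set.ncard_compl, Set.ncard_coe_finset, Nat.card_eq_fintype_card]
    have := A.card_le_univ
    omega
  rw [Set.ncard_coe_finset] at hI3
  obtain ⟨d, hd2, hd, h3, hn⟩ : ∃ d, 2 ≤ d ∧ MinusHypo T T' d ∧ Hypo T T' 3 ∧
      A.card + 1 + d ≤ Fintype.card V := by
    rcases hyp with ⟨h3, hd, _⟩ | ⟨hd, _⟩
    · exact ⟨2, le_rfl, hd, h3, by omega⟩
    · exact ⟨3, by norm_num, hd, hd.hypo le_rfl (by omega), by omega⟩
  have hI' := hI.of_hypo3 hind (by rwa [Set.ncard_coe_finset]) h3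
  have hiso := iso_restrict_of_minusHypo hd hd2 (by omega) hI hI' hind (by omega)
  have hplus := ncard_iplus_eq_of_minusHypo hd hd2 hn hI hI' hind hI3 hiso
  have hne : (↑A : Set V).Nonempty := by
    rw [Finset.coe_nonempty, ← Finset.card_pos]
    omega
  have := ncard_iplus_add_ncard_iminus hI hne
  have := ncard_iplus_add_ncard_iminus hI' hne
  exact ⟨hplus, by omega⟩

/-- Let `T`, `T'` be tournaments on `V` with `|V| ≥ 6` and `I` an
interval of `T` with `|I| ≥ 3` such that `T[I]` is indecomposable. If `T` and
`T'` are `{3}`- and `{-2}`-hypomorphic and `|V∖I| ≥ 3`, then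
`|I⁺_T| = |I⁺_{T'}|` and `|I⁻_T| = |I⁻_{T'}|`; likewise if `T` and `T'` are
`{-3}`-hypomorphic and `|V∖I| ≥ 4`. -/
theorem stmt7 {V : Type*} [Fintype V] (T T' : Tournament V)
    (hcard : 6 ≤ Fintype.card V) (I : Set V) (hI : T.IsInterval I)
    (hI3 : 3 ≤ I.ncard) (hind : (T.restrict I).Indecomposable) :
    ((Tournament.Hypo T T' 3 ∧ Tournament.MinusHypo T T' 2 ∧ 3 ≤ Iᶜ.ncard) ∨
      (Tournament.MinusHypo T T' 3 ∧ 4 ≤ Iᶜ.ncard)) →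
    (Tournament.Iplus T I).ncard = (Tournament.Iplus T' I).ncard ∧
      (Tournament.Iminus T I).ncard = (Tournament.Iminus T' I).ncard :=
  stmt7_general T T' I hI hI3 hind
end

section
/- Let T be a {−3}-self dual tournament with at least 7 vertices. If T embeds a diamond, then every vertex of T is the center of at least one diamond of T. -/
namespace Tournament

variable {V W : Type*}

section Stmt10Aux

variable {V : Type*}

lemma arc_ne {T : Tournament V} {u v : V} (h : T.arc u v) : u ≠ v := by
  rintro rfl; exact T.irrefl u h

lemma asymm {T : Tournament V} {u v : V} (h1 : T.arc u v) (h2 : T.arc v u) : False := by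
  rcases eq_or_ne u v with rfl | hne
  · exact T.irrefl u h1
  · exact ((T.total u v hne).mp h1) h2

lemma arc_or {T : Tournament V} {u v : V} (h : u ≠ v) : T.arc u v ∨ T.arc v u := by
  by_cases ha : T.arc u v
  · exact Or.inl ha
  · exact Or.inr (by
      by_contra hb
      exact ha ((T.total u v h).mpr (by simpa using hb)))

/-- 3-cycle. -/
def Cyc (T : Tournament V) (u v w : V) : Prop := T.arc u v ∧ T.arc v w ∧ T.arc w u

lemma Cyc.rot {T : Tournament V} {u v w : V} (h : T.Cyc u v w) : T.Cyc v w u :=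
  ⟨h.2.1, h.2.2, h.1⟩

variable [DecidableEq V]

/-- positive diamond (as a 4-element finset). -/
def PosD (T : Tournament V) (Y : Finset V) : Prop :=
  ∃ p q r d : V, Y = {p, q, r, d} ∧ T.Cyc p q r ∧ T.arc p d ∧ T.arc q d ∧ T.arc r d

/-- negative diamond. -/
def NegD (T : Tournament V) (Y : Finset V) : Prop :=
  ∃ p q r d : V, Y = {p, q, r, d} ∧ T.Cyc p q r ∧ T.arc d p ∧ T.arc d q ∧ T.arc d r

lemma PosD.card4 {T : Tournament V} {Y : Finset V} (h : T.PosD Y) : Y.card = 4 := by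
  obtain ⟨p, q, r, d, rfl, hc, h1, h2, h3⟩ := h
  have hpq := arc_ne hc.1
  have hqr := arc_ne hc.2.1
  have hrp := arc_ne hc.2.2
  have hpd := arc_ne h1
  have hqd := arc_ne h2
  have hrd := arc_ne h3
  rw [Finset.card_insert_of_notMem (by simp [hpq, hpd, hrp.symm]),
      Finset.card_insert_of_notMem (by simp [hqr, hqd]),
      Finset.card_insert_of_notMem (by simp [hrd]), Finset.card_singleton]

lemma NegD.card4 {T : Tournament V} {Y : Finset V} (h : T.NegD Y) : Y.card = 4 := by
  obtain ⟨p, q, r, d, rfl, hc, h1, h2, h3⟩ := h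
  have hpq := arc_ne hc.1
  have hqr := arc_ne hc.2.1
  have hrp := arc_ne hc.2.2
  have hpd := (arc_ne h1).symm
  have hqd := (arc_ne h2).symm
  have hrd := (arc_ne h3).symm
  rw [Finset.card_insert_of_notMem (by simp [hpq, hpd, hrp.symm]),
      Finset.card_insert_of_notMem (by simp [hqr, hqd]),
      Finset.card_insert_of_notMem (by simp [hrd]), Finset.card_singleton]

end Stmt10Aux

section Stmt10Count

open Finset

variable {V : Type*} [Fintype V] [DecidableEq V]

/-- number of sets satisfying `D` and disjoint from `W`. -/
noncomputable def cnt (D : Finset V → Prop) (W : Finset V) : ℕ := by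
  classical exact (Finset.univ.filter (fun Y : Finset V => D Y ∧ Disjoint Y W)).card

lemma cnt_def (D : Finset V → Prop) [DecidablePred D] (W : Finset V) :
    cnt D W = (Finset.univ.filter (fun Y : Finset V => D Y ∧ Disjoint Y W)).card := by
  unfold cnt; congr

lemma cnt_rec (D : Finset V → Prop) (hD : ∀ Y, D Y → Y.card = 4) (W : Finset V) :
    ∑ w ∈ Wᶜ, cnt D (insert w W) = cnt D W * (Fintype.card V - W.card - 4) := by
  classical
  simp only [cnt_def]
  simp only [Finset.card_filter]
  rw [Finset.sum_comm]
  have key : ∀ Y : Finset V,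
      (∑ w ∈ Wᶜ, if D Y ∧ Disjoint Y (insert w W) then (1:ℕ) else 0)
      = if D Y ∧ Disjoint Y W then (Fintype.card V - W.card - 4) else 0 := by
    intro Y
    by_cases hY : D Y ∧ Disjoint Y W
    · have hYW : Y ⊆ Wᶜ := fun a ha => Finset.mem_compl.mpr (Finset.disjoint_left.mp hY.2 ha)
      rw [if_pos hY]
      calc ∑ w ∈ Wᶜ, (if D Y ∧ Disjoint Y (insert w W) then (1:ℕ) else 0)
          = ∑ w ∈ Wᶜ, (if w ∉ Y then (1:ℕ) else 0) := by
            refine Finset.sum_congr rfl (fun w _ => ?_)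
            have hiff : (D Y ∧ Disjoint Y (insert w W)) ↔ (w ∉ Y) := by
              rw [Finset.disjoint_insert_right]
              constructor
              · tauto
              · intro hw; exact ⟨hY.1, hw, hY.2⟩
            simp only [hiff]
        _ = ((Wᶜ).filter (fun w => w ∉ Y)).card := (Finset.card_filter _ _).symm
        _ = (Wᶜ \ Y).card := by rw [Finset.sdiff_eq_filter]
        _ = Wᶜ.card - Y.card := Finset.card_sdiff_of_subset hYW
        _ = Fintype.card V - W.card - 4 := by rw [Finset.card_compl, hD Y hY.1]
    · rw [if_neg hY]
      apply Finset.sum_eq_zero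
      intro w _
      rw [if_neg]
      rw [Finset.disjoint_insert_right]
      tauto
  rw [Finset.sum_congr rfl (fun Y _ => key Y)]
  rw [← Finset.sum_filter, Finset.sum_const, smul_eq_mul, mul_comm, Finset.card_filter]
  ring

end Stmt10Count

section Stmt10Base

open Finset

variable {V : Type*} [Fintype V] [DecidableEq V]

lemma cnt_base (T : Tournament V) (hsd : T.MinusSelfDual 3) (W : Finset V)
    (hW : W.card = 3) : cnt T.PosD W = cnt T.NegD W := by
  classical
  have hsd' := hsd (↑W : Set V) (by rw [Set.ncard_coe_finset, hW])
  obtain ⟨e, he⟩ := hsd'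
  -- φ and ψ as maps V → V
  have hmemS : ∀ v : V, v ∈ ((↑W : Set V)ᶜ) ↔ v ∉ W := by intro v; simp
  let φ : V → V := fun v => if h : v ∈ ((↑W : Set V)ᶜ) then (e ⟨v, h⟩ : ↥((↑W : Set V)ᶜ)).1 else v
  let ψ : V → V := fun v => if h : v ∈ ((↑W : Set V)ᶜ) then (e.symm ⟨v, h⟩ : ↥((↑W : Set V)ᶜ)).1 else v
  have hφS : ∀ v, v ∉ W → φ v ∉ W := by
    intro v hv
    have h : v ∈ ((↑W : Set V)ᶜ) := (hmemS v).mpr hv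
    have : φ v = (e ⟨v, h⟩ : ↥((↑W : Set V)ᶜ)).1 := dif_pos h
    rw [this]
    exact (hmemS _).mp (e ⟨v, h⟩).2
  have hψS : ∀ v, v ∉ W → ψ v ∉ W := by
    intro v hv
    have h : v ∈ ((↑W : Set V)ᶜ) := (hmemS v).mpr hv
    have : ψ v = (e.symm ⟨v, h⟩ : ↥((↑W : Set V)ᶜ)).1 := dif_pos h
    rw [this]
    exact (hmemS _).mp (e.symm ⟨v, h⟩).2
  have hψφ : ∀ v, v ∉ W → ψ (φ v) = v := by
    intro v hv
    have h : v ∈ ((↑W : Set V)ᶜ) := (hmemS v).mpr hv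
    have h1 : φ v = (e ⟨v, h⟩ : ↥((↑W : Set V)ᶜ)).1 := dif_pos h
    have h2 : φ v ∈ ((↑W : Set V)ᶜ) := h1 ▸ (e ⟨v, h⟩).2
    have h3 : ψ (φ v) = (e.symm ⟨φ v, h2⟩ : ↥((↑W : Set V)ᶜ)).1 := dif_pos h2
    rw [h3]
    have : (⟨φ v, h2⟩ : ↥((↑W : Set V)ᶜ)) = e ⟨v, h⟩ := Subtype.ext h1
    rw [this, Equiv.symm_apply_apply]
  have hφψ : ∀ v, v ∉ W → φ (ψ v) = v := by
    intro v hv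
    have h : v ∈ ((↑W : Set V)ᶜ) := (hmemS v).mpr hv
    have h1 : ψ v = (e.symm ⟨v, h⟩ : ↥((↑W : Set V)ᶜ)).1 := dif_pos h
    have h2 : ψ v ∈ ((↑W : Set V)ᶜ) := h1 ▸ (e.symm ⟨v, h⟩).2
    have h3 : φ (ψ v) = (e ⟨ψ v, h2⟩ : ↥((↑W : Set V)ᶜ)).1 := dif_pos h2
    rw [h3]
    have : (⟨ψ v, h2⟩ : ↥((↑W : Set V)ᶜ)) = e.symm ⟨v, h⟩ := Subtype.ext h1
    rw [this, Equiv.apply_symm_apply]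
  -- arc transfer
  have harcφ : ∀ u v, u ∉ W → v ∉ W → (T.arc u v ↔ T.arc (φ v) (φ u)) := by
    intro u v hu hv
    have hu' : u ∈ ((↑W : Set V)ᶜ) := (hmemS u).mpr hu
    have hv' : v ∈ ((↑W : Set V)ᶜ) := (hmemS v).mpr hv
    have := he ⟨u, hu'⟩ ⟨v, hv'⟩
    have hφu : φ u = (e ⟨u, hu'⟩ : ↥((↑W : Set V)ᶜ)).1 := dif_pos hu'
    have hφv : φ v = (e ⟨v, hv'⟩ : ↥((↑W : Set V)ᶜ)).1 := dif_pos hv'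
    rw [hφu, hφv]
    exact this
  have harcψ : ∀ u v, u ∉ W → v ∉ W → (T.arc u v ↔ T.arc (ψ v) (ψ u)) := by
    intro u v hu hv
    have hu' : u ∈ ((↑W : Set V)ᶜ) := (hmemS u).mpr hu
    have hv' : v ∈ ((↑W : Set V)ᶜ) := (hmemS v).mpr hv
    have := he (e.symm ⟨v, hv'⟩) (e.symm ⟨u, hu'⟩)
    simp only [Equiv.apply_symm_apply] at this
    have hψu : ψ u = (e.symm ⟨u, hu'⟩ : ↥((↑W : Set V)ᶜ)).1 := dif_pos hu'
    have hψv : ψ v = (e.symm ⟨v, hv'⟩ : ↥((↑W : Set V)ᶜ)).1 := dif_pos hv'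
    rw [hψu, hψv]
    exact this.symm
  -- images of diamonds
  have himg : ∀ (Y : Finset V), T.PosD Y → Disjoint Y W →
      T.NegD (Y.image φ) ∧ Disjoint (Y.image φ) W := by
    intro Y hY hdisj
    obtain ⟨p, q, r, d, rfl, hc, h1, h2, h3⟩ := hY
    have hmem : ∀ v ∈ ({p, q, r, d} : Finset V), v ∉ W :=
      fun v hv => Finset.disjoint_left.mp hdisj hv
    have hp := hmem p (by simp); have hq := hmem q (by simp)
    have hr := hmem r (by simp); have hd := hmem d (by simp)
    constructor
    · refine ⟨φ p, φ r, φ q, φ d, ?_, ?_, ?_, ?_, ?_⟩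
      · rw [Finset.image_insert, Finset.image_insert, Finset.image_insert,
          Finset.image_singleton]
        ext z; simp; tauto
      · exact ⟨(harcφ r p hr hp).mp hc.2.2, (harcφ q r hq hr).mp hc.2.1,
          (harcφ p q hp hq).mp hc.1⟩
      · exact (harcφ p d hp hd).mp h1
      · exact (harcφ r d hr hd).mp h3
      · exact (harcφ q d hq hd).mp h2
    · rw [Finset.disjoint_left]
      intro a ha
      obtain ⟨b, hb, rfl⟩ := Finset.mem_image.mp ha
      exact hφS b (hmem b hb)
  have himg' : ∀ (Y : Finset V), T.NegD Y → Disjoint Y W →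
      T.PosD (Y.image ψ) ∧ Disjoint (Y.image ψ) W := by
    intro Y hY hdisj
    obtain ⟨p, q, r, d, rfl, hc, h1, h2, h3⟩ := hY
    have hmem : ∀ v ∈ ({p, q, r, d} : Finset V), v ∉ W :=
      fun v hv => Finset.disjoint_left.mp hdisj hv
    have hp := hmem p (by simp); have hq := hmem q (by simp)
    have hr := hmem r (by simp); have hd := hmem d (by simp)
    constructor
    · refine ⟨ψ p, ψ r, ψ q, ψ d, ?_, ?_, ?_, ?_, ?_⟩
      · rw [Finset.image_insert, Finset.image_insert, Finset.image_insert,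
          Finset.image_singleton]
        ext z; simp; tauto
      · exact ⟨(harcψ r p hr hp).mp hc.2.2, (harcψ q r hq hr).mp hc.2.1,
          (harcψ p q hp hq).mp hc.1⟩
      · exact (harcψ d p hd hp).mp h1
      · exact (harcψ d r hd hr).mp h3
      · exact (harcψ d q hd hq).mp h2
    · rw [Finset.disjoint_left]
      intro a ha
      obtain ⟨b, hb, rfl⟩ := Finset.mem_image.mp ha
      exact hψS b (hmem b hb)
  -- the bijection
  rw [cnt_def, cnt_def]
  refine Finset.card_bij' (fun Y _ => Y.image φ) (fun Y _ => Y.image ψ) ?_ ?_ ?_ ?_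
  · intro Y hY
    rw [Finset.mem_filter] at hY ⊢
    exact ⟨Finset.mem_univ _, (himg Y hY.2.1 hY.2.2).1, (himg Y hY.2.1 hY.2.2).2⟩
  · intro Y hY
    rw [Finset.mem_filter] at hY ⊢
    exact ⟨Finset.mem_univ _, (himg' Y hY.2.1 hY.2.2).1, (himg' Y hY.2.1 hY.2.2).2⟩
  · intro Y hY
    rw [Finset.mem_filter] at hY
    show Finset.image ψ (Finset.image φ Y) = Y
    rw [Finset.image_image]
    have : ∀ b ∈ Y, (ψ ∘ φ) b = id b := by
      intro b hb
      exact hψφ b (Finset.disjoint_left.mp hY.2.2 hb)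
    rw [Finset.image_congr this, Finset.image_id]
  · intro Y hY
    rw [Finset.mem_filter] at hY
    show Finset.image φ (Finset.image ψ Y) = Y
    rw [Finset.image_image]
    have : ∀ b ∈ Y, (φ ∘ ψ) b = id b := by
      intro b hb
      exact hφψ b (Finset.disjoint_left.mp hY.2.2 hb)
    rw [Finset.image_congr this, Finset.image_id]

end Stmt10Base

section Stmt10Chain

open Finset

variable {V : Type*} [Fintype V] [DecidableEq V]

lemma cnt_eq_of_card_le (T : Tournament V) (hsd : T.MinusSelfDual 3)
    (hn : 7 ≤ Fintype.card V) (W : Finset V) (hW : W.card ≤ 3) :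
    cnt T.PosD W = cnt T.NegD W := by
  classical
  have main : ∀ k : ℕ, k ≤ 3 → ∀ W : Finset V, W.card = 3 - k →
      cnt T.PosD W = cnt T.NegD W := by
    intro k
    induction k with
    | zero =>
      intro _ W hW
      exact cnt_base T hsd W (by simpa using hW)
    | succ m ih =>
      intro hm W hWc
      have hWle : W.card ≤ 2 := by omega
      have hfac : 0 < Fintype.card V - W.card - 4 := by omega
      have h1 : ∑ w ∈ Wᶜ, cnt T.PosD (insert w W)
          = ∑ w ∈ Wᶜ, cnt T.NegD (insert w W) := by
        refine Finset.sum_congr rfl fun w hw => ?_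
        have hwW : w ∉ W := Finset.mem_compl.mp hw
        refine ih (by omega) (insert w W) ?_
        rw [Finset.card_insert_of_notMem hwW, hWc]
        omega
      have h2 := cnt_rec T.PosD (fun Y h => h.card4) W
      have h3 := cnt_rec T.NegD (fun Y h => h.card4) W
      rw [h2, h3] at h1
      exact Nat.eq_of_mul_eq_mul_right hfac h1
  exact main (3 - W.card) (by omega) W (by omega)

lemma indicator_ie (S Y : Finset V) :
    ∑ W ∈ S.powerset, (-1 : ℤ) ^ W.card * (if Disjoint Y W then 1 else 0)
      = if S ⊆ Y then 1 else 0 := by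
  classical
  set S' : Finset V := S.filter (fun x => x ∉ Y) with hS'
  have hsub : S' ⊆ S := Finset.filter_subset _ _
  have step1 : ∀ W ∈ S.powerset,
      (-1 : ℤ) ^ W.card * (if Disjoint Y W then 1 else 0)
        = if W ⊆ S' then (-1 : ℤ) ^ W.card else 0 := by
    intro W hW
    have hWS : W ⊆ S := Finset.mem_powerset.mp hW
    have : Disjoint Y W ↔ W ⊆ S' := by
      rw [Finset.disjoint_right]
      constructor
      · intro h w hw
        exact Finset.mem_filter.mpr ⟨hWS hw, h hw⟩
      · intro h w hw
        exact (Finset.mem_filter.mp (h hw)).2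
    by_cases hd : Disjoint Y W
    · rw [if_pos hd, if_pos (this.mp hd), mul_one]
    · rw [if_neg hd, if_neg (fun hc => hd (this.mpr hc)), mul_zero]
  rw [Finset.sum_congr rfl step1, Finset.sum_ite]
  have hps : S.powerset.filter (fun W => W ⊆ S') = S'.powerset := by
    ext A
    simp only [Finset.mem_filter, Finset.mem_powerset]
    exact ⟨fun h => h.2, fun h => ⟨h.trans hsub, h⟩⟩
  rw [hps, Finset.sum_const_zero, add_zero, Finset.sum_powerset_neg_one_pow_card]
  have : S' = ∅ ↔ S ⊆ Y := by
    rw [hS', Finset.filter_eq_empty_iff]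
    constructor
    · intro h w hw
      by_contra hc
      exact (h hw) hc
    · intro h w hw hc
      exact hc (h hw)
  by_cases hS : S ⊆ Y
  · rw [if_pos (this.mpr hS), if_pos hS]
  · rw [if_neg (fun hc => hS (this.mp hc)), if_neg hS]

end Stmt10Chain

section Stmt10Triple

open Finset

variable {V : Type*} [Fintype V] [DecidableEq V]

noncomputable def tcnt (D : Finset V → Prop) (S : Finset V) : ℕ := by
  classical exact (Finset.univ.filter (fun Y : Finset V => D Y ∧ S ⊆ Y)).card

lemma tcnt_def (D : Finset V → Prop) [DecidablePred D] (S : Finset V) :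
    tcnt D S = (Finset.univ.filter (fun Y : Finset V => D Y ∧ S ⊆ Y)).card := by
  unfold tcnt; congr

lemma tcnt_expand (D : Finset V → Prop) [DecidablePred D] (S : Finset V) :
    ((tcnt D S : ℕ) : ℤ)
      = ∑ W ∈ S.powerset, (-1 : ℤ) ^ W.card * (cnt D W : ℤ) := by
  classical
  rw [tcnt_def]
  have h1 : ((Finset.univ.filter (fun Y : Finset V => D Y ∧ S ⊆ Y)).card : ℤ)
      = ∑ Y : Finset V, (if D Y then (if S ⊆ Y then (1:ℤ) else 0) else 0) := by
    rw [Finset.card_filter]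
    push_cast
    refine Finset.sum_congr rfl fun Y _ => ?_
    by_cases h1 : D Y <;> by_cases h2 : S ⊆ Y <;> simp [h1, h2]
  rw [h1]
  have h2 : ∀ Y : Finset V, (if D Y then (if S ⊆ Y then (1:ℤ) else 0) else 0)
      = ∑ W ∈ S.powerset, (-1 : ℤ) ^ W.card * (if D Y ∧ Disjoint Y W then 1 else 0) := by
    intro Y
    by_cases hD : D Y
    · rw [if_pos hD, ← indicator_ie S Y]
      refine Finset.sum_congr rfl fun W _ => ?_
      simp only [eq_true hD, true_and]
    · rw [if_neg hD]
      rw [Finset.sum_eq_zero]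
      intro W _
      rw [if_neg (by tauto), mul_zero]
  rw [Finset.sum_congr rfl fun Y _ => h2 Y, Finset.sum_comm]
  refine Finset.sum_congr rfl fun W _ => ?_
  rw [← Finset.mul_sum]
  congr 1
  rw [cnt_def]
  rw [Finset.card_filter]
  push_cast
  rfl

lemma tcnt_eq (T : Tournament V) (hsd : T.MinusSelfDual 3)
    (hn : 7 ≤ Fintype.card V) (S : Finset V) (hS : S.card = 3) :
    tcnt T.PosD S = tcnt T.NegD S := by
  classical
  have hpos := tcnt_expand T.PosD S
  have hneg := tcnt_expand T.NegD S
  have heq : ∀ W ∈ S.powerset, (-1 : ℤ) ^ W.card * (cnt T.PosD W : ℤ)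
      = (-1 : ℤ) ^ W.card * (cnt T.NegD W : ℤ) := by
    intro W hW
    have hWle : W.card ≤ 3 := by
      rw [← hS]
      exact Finset.card_le_card (Finset.mem_powerset.mp hW)
    rw [cnt_eq_of_card_le T hsd hn W hWle]
  have := hpos.trans ((Finset.sum_congr rfl heq).trans hneg.symm)
  exact_mod_cast this

end Stmt10Triple

section Stmt10Main

open Finset

variable {V : Type*} [Fintype V] [DecidableEq V]

lemma negD_mem {T : Tournament V} {Y : Finset V} {x : V} (h : T.NegD Y) (hx : x ∈ Y) :
    (∃ p q r, Y = {p, q, r, x} ∧ T.Cyc p q r ∧ T.arc x p ∧ T.arc x q ∧ T.arc x r) ∨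
    (∃ q r d, Y = {x, q, r, d} ∧ T.Cyc x q r ∧ T.arc d x ∧ T.arc d q ∧ T.arc d r) := by
  obtain ⟨p, q, r, d, rfl, hc, h1, h2, h3⟩ := h
  simp only [Finset.mem_insert, Finset.mem_singleton] at hx
  rcases hx with rfl | rfl | rfl | rfl
  · exact Or.inr ⟨q, r, d, rfl, hc, h1, h2, h3⟩
  · refine Or.inr ⟨r, p, d, by ext z; simp; tauto, hc.rot, h2, h3, h1⟩
  · refine Or.inr ⟨p, q, d, by ext z; simp; tauto, hc.rot.rot, h3, h1, h2⟩
  · exact Or.inl ⟨p, q, r, rfl, hc, h1, h2, h3⟩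

lemma posD_mem {T : Tournament V} {Y : Finset V} {x : V} (h : T.PosD Y) (hx : x ∈ Y) :
    (∃ p q r, Y = {p, q, r, x} ∧ T.Cyc p q r ∧ T.arc p x ∧ T.arc q x ∧ T.arc r x) ∨
    (∃ q r d, Y = {x, q, r, d} ∧ T.Cyc x q r ∧ T.arc x d ∧ T.arc q d ∧ T.arc r d) := by
  obtain ⟨p, q, r, d, rfl, hc, h1, h2, h3⟩ := h
  simp only [Finset.mem_insert, Finset.mem_singleton] at hx
  rcases hx with rfl | rfl | rfl | rfl
  · exact Or.inr ⟨q, r, d, rfl, hc, h1, h2, h3⟩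
  · refine Or.inr ⟨r, p, d, by ext z; simp; tauto, hc.rot, h2, h3, h1⟩
  · refine Or.inr ⟨p, q, d, by ext z; simp; tauto, hc.rot.rot, h3, h1, h2⟩
  · exact Or.inl ⟨p, q, r, rfl, hc, h1, h2, h3⟩

/-- Key lemma 1: no "out-out" pattern. -/
lemma noPattern1 (T : Tournament V) (hsd : T.MinusSelfDual 3)
    (hn : 7 ≤ Fintype.card V) {x a a' u : V}
    (hA : ∀ p q r, T.arc x p → T.arc x q → T.arc x r → ¬ T.Cyc p q r)
    (hxa : T.arc x a) (hxa' : T.arc x a') (haa' : T.arc a a')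
    (hau : T.arc a u) (hux : T.arc u x) (hua' : T.arc u a') : False := by
  classical
  have hxna := arc_ne hxa
  have hxna' := arc_ne hxa'
  have hana' := arc_ne haa'
  set S : Finset V := {x, a, a'} with hSdef
  have hS : S.card = 3 := by
    rw [hSdef, Finset.card_insert_of_notMem (by simp [hxna, hxna']),
      Finset.card_insert_of_notMem (by simp [hana']), Finset.card_singleton]
  have hmain := tcnt_eq T hsd hn S hS
  have hN : tcnt T.NegD S = 0 := by
    rw [tcnt_def, Finset.card_eq_zero, Finset.filter_eq_empty_iff]
    rintro Y - ⟨hY, hsub⟩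
    have hxY : x ∈ Y := hsub (by simp [hSdef])
    have haY : a ∈ Y := hsub (by simp [hSdef])
    have ha'Y : a' ∈ Y := hsub (by simp [hSdef])
    rcases negD_mem hY hxY with ⟨p, q, r, hYeq, hc, h1, h2, h3⟩ |
      ⟨q, r, d, hYeq, hc, hdx, hdq, hdr⟩
    · exact hA p q r h1 h2 h3 hc
    · subst hYeq
      simp only [Finset.mem_insert, Finset.mem_singleton] at haY ha'Y
      rcases haY with rfl | rfl | rfl | rfl
      · exact (hxna rfl).elim
      · rcases ha'Y with rfl | rfl | rfl | rfl
        · exact hxna' rfl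
        · exact hana' rfl
        · exact asymm hxa' hc.2.2
        · exact asymm hxa' hdx
      · rcases ha'Y with rfl | rfl | rfl | rfl
        · exact hxna' rfl
        · exact asymm hxa hc.2.2
        · exact hana' rfl
        · exact asymm hxa' hdx
      · exact asymm hxa hdx
  have hP : 0 < tcnt T.PosD S := by
    rw [tcnt_def, Finset.card_pos]
    refine ⟨{x, a, u, a'}, Finset.mem_filter.mpr ⟨Finset.mem_univ _, ?_, ?_⟩⟩
    · exact ⟨x, a, u, a', rfl, ⟨hxa, hau, hux⟩, hxa', haa', hua'⟩
    · intro z hz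
      rw [hSdef] at hz
      simp only [Finset.mem_insert, Finset.mem_singleton] at hz ⊢
      tauto
  omega

/-- Key lemma 2: no "in-in" pattern. -/
lemma noPattern2 (T : Tournament V) (hsd : T.MinusSelfDual 3)
    (hn : 7 ≤ Fintype.card V) {x b b' u : V}
    (hB : ∀ p q r, T.arc p x → T.arc q x → T.arc r x → ¬ T.Cyc p q r)
    (hbx : T.arc b x) (hb'x : T.arc b' x) (hbb' : T.arc b b')
    (hxu : T.arc x u) (hbu : T.arc b u) (hub' : T.arc u b') : False := by
  classical
  have hxnb := (arc_ne hbx).symm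
  have hxnb' := (arc_ne hb'x).symm
  have hbnb' := arc_ne hbb'
  set S : Finset V := {x, b, b'} with hSdef
  have hS : S.card = 3 := by
    rw [hSdef, Finset.card_insert_of_notMem (by simp [hxnb, hxnb']),
      Finset.card_insert_of_notMem (by simp [hbnb']), Finset.card_singleton]
  have hmain := tcnt_eq T hsd hn S hS
  have hP : tcnt T.PosD S = 0 := by
    rw [tcnt_def, Finset.card_eq_zero, Finset.filter_eq_empty_iff]
    rintro Y - ⟨hY, hsub⟩
    have hxY : x ∈ Y := hsub (by simp [hSdef])
    have hbY : b ∈ Y := hsub (by simp [hSdef])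
    have hb'Y : b' ∈ Y := hsub (by simp [hSdef])
    rcases posD_mem hY hxY with ⟨p, q, r, hYeq, hc, h1, h2, h3⟩ |
      ⟨q, r, d, hYeq, hc, hxd, hqd, hrd⟩
    · exact hB p q r h1 h2 h3 hc
    · subst hYeq
      simp only [Finset.mem_insert, Finset.mem_singleton] at hbY hb'Y
      rcases hbY with rfl | rfl | rfl | rfl
      · exact (hxnb rfl).elim
      · rcases hb'Y with rfl | rfl | rfl | rfl
        · exact hxnb' rfl
        · exact hbnb' rfl
        · exact asymm hbx hc.1
        · exact asymm hb'x hxd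
      · rcases hb'Y with rfl | rfl | rfl | rfl
        · exact hxnb' rfl
        · exact asymm hb'x hc.1
        · exact hbnb' rfl
        · exact asymm hb'x hxd
      · exact asymm hbx hxd
  have hN : 0 < tcnt T.NegD S := by
    rw [tcnt_def, Finset.card_pos]
    refine ⟨{x, u, b', b}, Finset.mem_filter.mpr ⟨Finset.mem_univ _, ?_, ?_⟩⟩
    · exact ⟨x, u, b', b, rfl, ⟨hxu, hub', hb'x⟩, hbx, hbu, hbb'⟩
    · intro z hz
      rw [hSdef] at hz
      simp only [Finset.mem_insert, Finset.mem_singleton] at hz ⊢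
      tauto
  omega

end Stmt10Main

section Stmt10Build

variable {V : Type*}

lemma C3_arc_iff (a b : Fin 3) :
    C3Tour.arc a b ↔ ((a = 0 ∧ b = 1) ∨ (a = 1 ∧ b = 2) ∨ (a = 2 ∧ b = 0)) := Iff.rfl

lemma DP_arc_iff (a b : Fin 4) :
    DeltaPlus.arc a b ↔ ((a = 0 ∧ b = 1) ∨ (a = 1 ∧ b = 2) ∨ (a = 2 ∧ b = 0) ∨
      (a = 0 ∧ b = 3) ∨ (a = 1 ∧ b = 3) ∨ (a = 2 ∧ b = 3)) := Iff.rfl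

lemma DM_arc_iff (a b : Fin 4) : DeltaMinus.arc a b ↔ DeltaPlus.arc b a := Iff.rfl

lemma iso_of_fun {A : Type*} {B : Type*} {T1 : Tournament A} {T2 : Tournament B}
    (g : B → A) (hg : Function.Bijective g)
    (h : ∀ i j, T1.arc (g i) (g j) ↔ T2.arc i j) : T1.Iso T2 := by
  let e := Equiv.ofBijective g hg
  refine ⟨e.symm, fun s t => ?_⟩
  have hs : g (e.symm s) = s := e.apply_symm_apply s
  have ht : g (e.symm t) = t := e.apply_symm_apply t
  have h2 := h (e.symm s) (e.symm t)
  rw [hs, ht] at h2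
  exact h2

lemma isoC3 {T : Tournament V} {u v w : V} (hc : T.Cyc u v w) :
    (T.restrict ({u, v, w} : Set V)).Iso C3Tour := by
  obtain ⟨h1, h2, h3⟩ := hc
  have nuv : u ≠ v := arc_ne h1
  have nvw : v ≠ w := arc_ne h2
  have nwu : w ≠ u := arc_ne h3
  have hu : u ∈ ({u, v, w} : Set V) := by simp
  have hv : v ∈ ({u, v, w} : Set V) := by simp
  have hw : w ∈ ({u, v, w} : Set V) := by simp
  let g : Fin 3 → ↥({u, v, w} : Set V) := fun i =>
    match i with
    | 0 => ⟨u, hu⟩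
    | 1 => ⟨v, hv⟩
    | 2 => ⟨w, hw⟩
  refine iso_of_fun g ⟨?_, ?_⟩ ?_
  · intro i j hij
    have hval : (g i).1 = (g j).1 := congrArg Subtype.val hij
    fin_cases i <;> fin_cases j <;> simp_all [g] <;> first
      | rfl
      | exact absurd hval (by tauto)
      | exact absurd hval.symm (by tauto)
  · intro s
    have hs := s.2
    simp only [Set.mem_insert_iff, Set.mem_singleton_iff] at hs
    rcases hs with h | h | h
    · exact ⟨0, Subtype.ext h.symm⟩
    · exact ⟨1, Subtype.ext h.symm⟩
    · exact ⟨2, Subtype.ext h.symm⟩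
  · intro i j
    fin_cases i <;> fin_cases j
    · exact iff_of_false (T.irrefl u) (by simp only [C3_arc_iff]; decide)
    · exact iff_of_true h1 (by simp only [C3_arc_iff]; decide)
    · exact iff_of_false (fun h => asymm h h3) (by simp only [C3_arc_iff]; decide)
    · exact iff_of_false (fun h => asymm h h1) (by simp only [C3_arc_iff]; decide)
    · exact iff_of_false (T.irrefl v) (by simp only [C3_arc_iff]; decide)
    · exact iff_of_true h2 (by simp only [C3_arc_iff]; decide)
    · exact iff_of_true h3 (by simp only [C3_arc_iff]; decide)
    · exact iff_of_false (fun h => asymm h h2) (by simp only [C3_arc_iff]; decide)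
    · exact iff_of_false (T.irrefl w) (by simp only [C3_arc_iff]; decide)

lemma diff_eq {u v w x : V} (nux : u ≠ x) (nvx : v ≠ x) (nwx : w ≠ x) :
    ({u, v, w, x} : Set V) \ {x} = ({u, v, w} : Set V) := by
  ext z
  simp only [Set.mem_diff, Set.mem_insert_iff, Set.mem_singleton_iff]
  constructor
  · rintro ⟨h | h | h | h, hz⟩
    · exact Or.inl h
    · exact Or.inr (Or.inl h)
    · exact Or.inr (Or.inr h)
    · exact absurd h hz
  · rintro (rfl | rfl | rfl)
    · exact ⟨Or.inl rfl, nux⟩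
    · exact ⟨Or.inr (Or.inl rfl), nvx⟩
    · exact ⟨Or.inr (Or.inr (Or.inl rfl)), nwx⟩

lemma ncard4 {u v w x : V} (nuv : u ≠ v) (nuw : u ≠ w) (nux : u ≠ x)
    (nvw : v ≠ w) (nvx : v ≠ x) (nwx : w ≠ x) :
    ({u, v, w, x} : Set V).ncard = 4 := by
  rw [Set.ncard_insert_of_notMem (by simp [nuv, nuw, nux]),
    Set.ncard_insert_of_notMem (by simp [nvw, nvx]),
    Set.ncard_insert_of_notMem (by simp [nwx]), Set.ncard_singleton]

/-- build a positive diamond with center `x` from a 3-cycle dominating `x`. -/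
lemma buildPos {T : Tournament V} {u v w x : V} (hc : T.Cyc u v w)
    (h1 : T.arc u x) (h2 : T.arc v x) (h3 : T.arc w x) :
    T.IsPosDiamond ({u, v, w, x} : Set V) x := by
  have nuv : u ≠ v := arc_ne hc.1
  have nvw : v ≠ w := arc_ne hc.2.1
  have nwu : w ≠ u := arc_ne hc.2.2
  have nux : u ≠ x := arc_ne h1
  have nvx : v ≠ x := arc_ne h2
  have nwx : w ≠ x := arc_ne h3
  have hu : u ∈ ({u, v, w, x} : Set V) := by simp
  have hv : v ∈ ({u, v, w, x} : Set V) := by simp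
  have hw : w ∈ ({u, v, w, x} : Set V) := by simp
  have hx : x ∈ ({u, v, w, x} : Set V) := by simp
  refine ⟨ncard4 nuv nwu.symm nux nvw nvx nwx, hx, ?_, ?_, ?_⟩
  · -- Iso with DeltaPlus : u↦0, v↦1, w↦2, x↦3
    let g : Fin 4 → ↥({u, v, w, x} : Set V) := fun i =>
      match i with
      | 0 => ⟨u, hu⟩
      | 1 => ⟨v, hv⟩
      | 2 => ⟨w, hw⟩
      | 3 => ⟨x, hx⟩
    refine iso_of_fun g ⟨?_, ?_⟩ ?_
    · intro i j hij
      have hval : (g i).1 = (g j).1 := congrArg Subtype.val hij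
      fin_cases i <;> fin_cases j <;> simp_all [g] <;> first
        | rfl
        | exact absurd hval (by tauto)
        | exact absurd hval.symm (by tauto)
    · intro s
      have hs := s.2
      simp only [Set.mem_insert_iff, Set.mem_singleton_iff] at hs
      rcases hs with h | h | h | h
      · exact ⟨0, Subtype.ext h.symm⟩
      · exact ⟨1, Subtype.ext h.symm⟩
      · exact ⟨2, Subtype.ext h.symm⟩
      · exact ⟨3, Subtype.ext h.symm⟩
    · intro i j
      fin_cases i <;> fin_cases j
      · exact iff_of_false (T.irrefl u) (by simp only [DP_arc_iff]; decide)
      · exact iff_of_true hc.1 (by simp only [DP_arc_iff]; decide)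
      · exact iff_of_false (fun h => asymm h hc.2.2) (by simp only [DP_arc_iff]; decide)
      · exact iff_of_true h1 (by simp only [DP_arc_iff]; decide)
      · exact iff_of_false (fun h => asymm h hc.1) (by simp only [DP_arc_iff]; decide)
      · exact iff_of_false (T.irrefl v) (by simp only [DP_arc_iff]; decide)
      · exact iff_of_true hc.2.1 (by simp only [DP_arc_iff]; decide)
      · exact iff_of_true h2 (by simp only [DP_arc_iff]; decide)
      · exact iff_of_true hc.2.2 (by simp only [DP_arc_iff]; decide)
      · exact iff_of_false (fun h => asymm h hc.2.1) (by simp only [DP_arc_iff]; decide)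
      · exact iff_of_false (T.irrefl w) (by simp only [DP_arc_iff]; decide)
      · exact iff_of_true h3 (by simp only [DP_arc_iff]; decide)
      · exact iff_of_false (fun h => asymm h h1) (by simp only [DP_arc_iff]; decide)
      · exact iff_of_false (fun h => asymm h h2) (by simp only [DP_arc_iff]; decide)
      · exact iff_of_false (fun h => asymm h h3) (by simp only [DP_arc_iff]; decide)
      · exact iff_of_false (T.irrefl x) (by simp only [DP_arc_iff]; decide)
  · rw [diff_eq nux nvx nwx]
    exact isoC3 hc
  · intro y hy
    rw [diff_eq nux nvx nwx] at hy
    simp only [Set.mem_insert_iff, Set.mem_singleton_iff] at hy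
    rcases hy with rfl | rfl | rfl
    · exact h1
    · exact h2
    · exact h3

/-- build a negative diamond with center `x` from a 3-cycle dominated by `x`. -/
lemma buildNeg {T : Tournament V} {u v w x : V} (hc : T.Cyc u v w)
    (h1 : T.arc x u) (h2 : T.arc x v) (h3 : T.arc x w) :
    T.IsNegDiamond ({u, v, w, x} : Set V) x := by
  have nuv : u ≠ v := arc_ne hc.1
  have nvw : v ≠ w := arc_ne hc.2.1
  have nwu : w ≠ u := arc_ne hc.2.2
  have nux : u ≠ x := (arc_ne h1).symm
  have nvx : v ≠ x := (arc_ne h2).symm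
  have nwx : w ≠ x := (arc_ne h3).symm
  have hu : u ∈ ({u, v, w, x} : Set V) := by simp
  have hv : v ∈ ({u, v, w, x} : Set V) := by simp
  have hw : w ∈ ({u, v, w, x} : Set V) := by simp
  have hx : x ∈ ({u, v, w, x} : Set V) := by simp
  refine ⟨ncard4 nuv nwu.symm nux nvw nvx nwx, hx, ?_, ?_, ?_⟩
  · -- Iso with DeltaMinus : u↦1, v↦0, w↦2, x↦3
    let g : Fin 4 → ↥({u, v, w, x} : Set V) := fun i =>
      match i with
      | 0 => ⟨v, hv⟩
      | 1 => ⟨u, hu⟩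
      | 2 => ⟨w, hw⟩
      | 3 => ⟨x, hx⟩
    refine iso_of_fun g ⟨?_, ?_⟩ ?_
    · intro i j hij
      have hval : (g i).1 = (g j).1 := congrArg Subtype.val hij
      fin_cases i <;> fin_cases j <;> simp_all [g] <;> first
        | rfl
        | exact absurd hval (by tauto)
        | exact absurd hval.symm (by tauto)
    · intro s
      have hs := s.2
      simp only [Set.mem_insert_iff, Set.mem_singleton_iff] at hs
      rcases hs with h | h | h | h
      · exact ⟨1, Subtype.ext h.symm⟩
      · exact ⟨0, Subtype.ext h.symm⟩
      · exact ⟨2, Subtype.ext h.symm⟩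
      · exact ⟨3, Subtype.ext h.symm⟩
    · intro i j
      fin_cases i <;> fin_cases j
      · exact iff_of_false (T.irrefl v) (by simp only [DM_arc_iff, DP_arc_iff]; decide)
      · exact iff_of_false (fun h => asymm h hc.1) (by simp only [DM_arc_iff, DP_arc_iff]; decide)
      · exact iff_of_true hc.2.1 (by simp only [DM_arc_iff, DP_arc_iff]; decide)
      · exact iff_of_false (fun h => asymm h h2) (by simp only [DM_arc_iff, DP_arc_iff]; decide)
      · exact iff_of_true hc.1 (by simp only [DM_arc_iff, DP_arc_iff]; decide)
      · exact iff_of_false (T.irrefl u) (by simp only [DM_arc_iff, DP_arc_iff]; decide)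
      · exact iff_of_false (fun h => asymm h hc.2.2) (by simp only [DM_arc_iff, DP_arc_iff]; decide)
      · exact iff_of_false (fun h => asymm h h1) (by simp only [DM_arc_iff, DP_arc_iff]; decide)
      · exact iff_of_false (fun h => asymm h hc.2.1) (by simp only [DM_arc_iff, DP_arc_iff]; decide)
      · exact iff_of_true hc.2.2 (by simp only [DM_arc_iff, DP_arc_iff]; decide)
      · exact iff_of_false (T.irrefl w) (by simp only [DM_arc_iff, DP_arc_iff]; decide)
      · exact iff_of_false (fun h => asymm h h3) (by simp only [DM_arc_iff, DP_arc_iff]; decide)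
      · exact iff_of_true h2 (by simp only [DM_arc_iff, DP_arc_iff]; decide)
      · exact iff_of_true h1 (by simp only [DM_arc_iff, DP_arc_iff]; decide)
      · exact iff_of_true h3 (by simp only [DM_arc_iff, DP_arc_iff]; decide)
      · exact iff_of_false (T.irrefl x) (by simp only [DM_arc_iff, DP_arc_iff]; decide)
  · rw [diff_eq nux nvx nwx]
    exact isoC3 hc
  · intro y hy
    rw [diff_eq nux nvx nwx] at hy
    simp only [Set.mem_insert_iff, Set.mem_singleton_iff] at hy
    rcases hy with rfl | rfl | rfl
    · exact h1
    · exact h2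
    · exact h3

end Stmt10Build

section Stmt10Final

variable {V : Type*}

lemma decode_diamond (T : Tournament V) (hd : T.EmbedsDiamond) :
    ∃ p q r w, T.Cyc p q r ∧
      ((T.arc p w ∧ T.arc q w ∧ T.arc r w) ∨ (T.arc w p ∧ T.arc w q ∧ T.arc w r)) := by
  obtain ⟨X, -, hiso | hiso⟩ := hd
  · obtain ⟨e, he⟩ := hiso
    have key : ∀ i j : Fin 4, DeltaPlus.arc i j → T.arc (e.symm i).1 (e.symm j).1 := by
      intro i j hij
      have h := he (e.symm i) (e.symm j)
      simp only [Equiv.apply_symm_apply] at h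
      exact h.mpr hij
    exact ⟨(e.symm 0).1, (e.symm 1).1, (e.symm 2).1, (e.symm 3).1,
      ⟨key 0 1 (by simp only [DP_arc_iff]; decide),
       key 1 2 (by simp only [DP_arc_iff]; decide),
       key 2 0 (by simp only [DP_arc_iff]; decide)⟩,
      Or.inl ⟨key 0 3 (by simp only [DP_arc_iff]; decide),
        key 1 3 (by simp only [DP_arc_iff]; decide),
        key 2 3 (by simp only [DP_arc_iff]; decide)⟩⟩
  · obtain ⟨e, he⟩ := hiso
    have key : ∀ i j : Fin 4, DeltaMinus.arc i j → T.arc (e.symm i).1 (e.symm j).1 := by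
      intro i j hij
      have h := he (e.symm i) (e.symm j)
      simp only [Equiv.apply_symm_apply] at h
      exact h.mpr hij
    exact ⟨(e.symm 1).1, (e.symm 0).1, (e.symm 2).1, (e.symm 3).1,
      ⟨key 1 0 (by simp only [DM_arc_iff, DP_arc_iff]; decide),
       key 0 2 (by simp only [DM_arc_iff, DP_arc_iff]; decide),
       key 2 1 (by simp only [DM_arc_iff, DP_arc_iff]; decide)⟩,
      Or.inr ⟨key 3 1 (by simp only [DM_arc_iff, DP_arc_iff]; decide),
        key 3 0 (by simp only [DM_arc_iff, DP_arc_iff]; decide),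
        key 3 2 (by simp only [DM_arc_iff, DP_arc_iff]; decide)⟩⟩

end Stmt10Final

end Tournament

open Tournament

/-- Let `T` be a `{-3}`-self dual tournament with at least 7
vertices. If `T` embeds a diamond, then every vertex of `T` is the center of
at least one diamond of `T`. -/
theorem stmt10 {V : Type*} [Fintype V] (T : Tournament V)
    (hcard : 7 ≤ Fintype.card V) (hsd : T.MinusSelfDual 3)
    (hd : T.EmbedsDiamond) :
    ∀ x : V, ∃ X : Set V, T.IsPosDiamond X x ∨ T.IsNegDiamond X x := by
  classical
  intro x
  by_contra hcon
  push_neg at hcon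
  -- no 3-cycle among out-neighbors of x
  have hOut : ∀ p q r, T.arc x p → T.arc x q → T.arc x r → ¬ T.Cyc p q r := by
    intro p q r h1 h2 h3 hc
    exact (hcon {p, q, r, x}).2 (buildNeg hc h1 h2 h3)
  -- no 3-cycle among in-neighbors of x
  have hIn : ∀ p q r, T.arc p x → T.arc q x → T.arc r x → ¬ T.Cyc p q r := by
    intro p q r h1 h2 h3 hc
    exact (hcon {p, q, r, x}).1 (buildPos hc h1 h2 h3)
  -- killing sub-lemmas
  -- x on the cycle of a positive diamond
  have posAt : ∀ q r w, T.Cyc x q r → T.arc x w → T.arc q w → T.arc r w → False := by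
    intro q r w hc h1 h2 h3
    exact noPattern1 T hsd hcard hOut hc.1 h1 h2 hc.2.1 hc.2.2 h3
  -- x on the cycle of a negative diamond
  have negAt : ∀ q r w, T.Cyc x q r → T.arc w x → T.arc w q → T.arc w r → False := by
    intro q r w hc h1 h2 h3
    exact noPattern2 T hsd hcard hIn h1 hc.2.2 h3 hc.1 h2 hc.2.1
  -- positive diamond, cycle with two out-neighbors a,a' and one in-neighbor b
  have pos2A : ∀ a a' b w, T.Cyc a a' b → T.arc x a → T.arc x a' → T.arc b x →
      T.arc a w → T.arc a' w → T.arc b w → False := by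
    intro a a' b w hc hxa hxa' hbx haw ha'w hbw
    by_cases hwx : w = x
    · subst hwx; exact asymm haw hxa
    rcases arc_or (T := T) (Ne.symm hwx) with hxw | hwx'
    · exact noPattern1 T hsd hcard hOut hxa' hxw ha'w hc.2.1 hbx hbw
    · exact noPattern2 T hsd hcard hIn hbx hwx' hbw hxa hc.2.2 haw
  -- positive diamond, cycle with one out-neighbor a and two in-neighbors b,b'
  have pos1A : ∀ a b b' w, T.Cyc a b b' → T.arc x a → T.arc b x → T.arc b' x →
      T.arc a w → T.arc b w → T.arc b' w → False := by
    intro a b b' w hc hxa hbx hb'x haw hbw hb'w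
    by_cases hwx : w = x
    · subst hwx; exact asymm haw hxa
    rcases arc_or (T := T) (Ne.symm hwx) with hxw | hwx'
    · exact noPattern1 T hsd hcard hOut hxa hxw haw hc.1 hbx hbw
    · exact noPattern2 T hsd hcard hIn hb'x hwx' hb'w hxa hc.2.2 haw
  -- negative diamond versions
  have neg2A : ∀ a a' b w, T.Cyc a a' b → T.arc x a → T.arc x a' → T.arc b x →
      T.arc w a → T.arc w a' → T.arc w b → False := by
    intro a a' b w hc hxa hxa' hbx hwa hwa' hwb
    by_cases hwx : w = x
    · subst hwx; exact asymm hwb hbx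
    rcases arc_or (T := T) (Ne.symm hwx) with hxw | hwx'
    · exact noPattern1 T hsd hcard hOut hxw hxa hwa hwb hbx hc.2.2
    · exact noPattern2 T hsd hcard hIn hwx' hbx hwb hxa' hwa' hc.2.1
  have neg1A : ∀ a b b' w, T.Cyc a b b' → T.arc x a → T.arc b x → T.arc b' x →
      T.arc w a → T.arc w b → T.arc w b' → False := by
    intro a b b' w hc hxa hbx hb'x hwa hwb hwb'
    by_cases hwx : w = x
    · subst hwx; exact asymm hwb hbx
    rcases arc_or (T := T) (Ne.symm hwx) with hxw | hwx'
    · exact noPattern1 T hsd hcard hOut hxw hxa hwa hwb' hb'x hc.2.2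
    · exact noPattern2 T hsd hcard hIn hwx' hbx hwb hxa hwa hc.1
  obtain ⟨p, q, r, w, hc, hcen⟩ := decode_diamond T hd
  rcases hcen with ⟨h1, h2, h3⟩ | ⟨h1, h2, h3⟩
  · -- positive diamond
    by_cases hxp : x = p
    · subst hxp; exact posAt q r w hc h1 h2 h3
    by_cases hxq : x = q
    · subst hxq; exact posAt r p w hc.rot h2 h3 h1
    by_cases hxr : x = r
    · subst hxr; exact posAt p q w hc.rot.rot h3 h1 h2
    rcases arc_or (T := T) hxp with hp | hp <;>
      rcases arc_or (T := T) hxq with hq | hq <;>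
        rcases arc_or (T := T) hxr with hr | hr
    · exact hOut p q r hp hq hr hc
    · exact pos2A p q r w hc hp hq hr h1 h2 h3
    · exact pos2A r p q w hc.rot.rot hr hp hq h3 h1 h2
    · exact pos1A p q r w hc hp hq hr h1 h2 h3
    · exact pos2A q r p w hc.rot hq hr hp h2 h3 h1
    · exact pos1A q r p w hc.rot hq hr hp h2 h3 h1
    · exact pos1A r p q w hc.rot.rot hr hp hq h3 h1 h2
    · exact hIn p q r hp hq hr hc
  · -- negative diamond
    by_cases hxw : x = w
    · subst hxw; exact hOut p q r h1 h2 h3 hc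
    by_cases hxp : x = p
    · subst hxp; exact negAt q r w hc h1 h2 h3
    by_cases hxq : x = q
    · subst hxq; exact negAt r p w hc.rot h2 h3 h1
    by_cases hxr : x = r
    · subst hxr; exact negAt p q w hc.rot.rot h3 h1 h2
    rcases arc_or (T := T) hxp with hp | hp <;>
      rcases arc_or (T := T) hxq with hq | hq <;>
        rcases arc_or (T := T) hxr with hr | hr
    · exact hOut p q r hp hq hr hc
    · exact neg2A p q r w hc hp hq hr h1 h2 h3
    · exact neg2A r p q w hc.rot.rot hr hp hq h3 h1 h2
    · exact neg1A p q r w hc hp hq hr h1 h2 h3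
    · exact neg2A q r p w hc.rot hq hr hp h2 h3 h1
    · exact neg1A q r p w hc.rot hq hr hp h2 h3 h1
    · exact neg1A r p q w hc.rot.rot hr hp hq h3 h1 h2
    · exact hIn p q r hp hq hr hc
end
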